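/- arXiv:1507.06356 — 5 statements merged into one kernel-verified Lean document; each statement's English description precedes it below -/
import Mathlib

section
/- Let 0 < c < 1 and suppose F(c) < 1. If (f,g) is an extremal pair for F(c), then g has a zero in the disk {z : |z| < c}. -/
open MeasureTheory Metric Set
open scoped ENNReal NNReal

noncomputable def bnorm (f : ℂ → ℂ) : ℝ :=
  Real.sqrt ((1 / Real.pi) * ∫ z in ball (0 : ℂ) 1, ‖f z‖ ^ 2)

def memA2 (f : ℂ → ℂ) : Prop :=
  DifferentiableOn ℂ f (ball (0 : ℂ) 1) ∧
    IntegrableOn (fun z => ‖f z‖ ^ 2) (ball (0 : ℂ) 1)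

def sphereA2 : Set (ℂ → ℂ) := {f | memA2 f ∧ bnorm f = 1}

noncomputable def ratioSup (c : ℝ) (f g : ℂ → ℂ) : ℝ≥0∞ :=
  ⨆ (z : ℂ) (_ : c ≤ ‖z‖ ∧ ‖z‖ < 1), (‖f z / g z‖₊ : ℝ≥0∞)

noncomputable def KF (c : ℝ) : ℝ≥0∞ :=
  ⨅ (f ∈ sphereA2) (g ∈ sphereA2), ratioSup c f g

noncomputable def KFn (n : ℕ) (c : ℝ) : ℝ≥0∞ :=
  ⨅ (p ∈ {p : Polynomial ℂ | p.degree ≤ (n : ℕ) ∧ (fun z => p.eval z) ∈ sphereA2})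
    (q ∈ {q : Polynomial ℂ | q.degree ≤ (n : ℕ) ∧ (fun z => q.eval z) ∈ sphereA2}),
      ratioSup c (fun z => p.eval z) (fun z => q.eval z)

def FGpair (c : ℝ) (f g : ℂ → ℂ) : Prop :=
  memA2 f ∧ memA2 g ∧ bnorm f ≤ 1 ∧ bnorm g ≤ 1 ∧
    ∀ z : ℂ, c ≤ ‖z‖ → ‖z‖ < 1 → ‖f z‖ ≤ ‖g z‖

noncomputable def KFB (c : ℝ) : ℝ :=
  sSup {x : ℝ | ∃ f g : ℂ → ℂ, FGpair c f g ∧ x = bnorm f ^ 2 - bnorm g ^ 2}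

open Filter Topology

lemma extend_lemma (S : Set ℂ) (hS : S.Finite) :
    ∀ (U : Set ℂ), IsOpen U → ∀ h : ℂ → ℂ,
      DifferentiableOn ℂ h (U \ S) →
      (∀ a ∈ S, a ∈ U → ∃ t ∈ 𝓝 a, ∃ C : ℝ, ∀ z ∈ t, z ∉ S → ‖h z‖ ≤ C) →
      ∃ H : ℂ → ℂ, DifferentiableOn ℂ H U ∧ Set.EqOn H h (U \ S) := by
  refine Set.Finite.induction_on (motive := fun S _ => ∀ (U : Set ℂ), IsOpen U → ∀ h : ℂ → ℂ,
      DifferentiableOn ℂ h (U \ S) →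
      (∀ a ∈ S, a ∈ U → ∃ t ∈ 𝓝 a, ∃ C : ℝ, ∀ z ∈ t, z ∉ S → ‖h z‖ ≤ C) →
      ∃ H : ℂ → ℂ, DifferentiableOn ℂ H U ∧ Set.EqOn H h (U \ S)) S hS ?_ ?_
  · intro U _ h hd _
    exact ⟨h, by simpa using hd, fun z _ => rfl⟩
  · rintro a s ha hs IH U hU h hd hb
    have hb' : ∀ b ∈ s, b ∈ U → ∃ t ∈ 𝓝 b, ∃ C : ℝ, ∀ z ∈ t, z ∉ s → ‖h z‖ ≤ C := by
      intro b hbs hbU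
      obtain ⟨t, htm, C, hC⟩ := hb b (Set.mem_insert_of_mem a hbs) hbU
      have hba : b ≠ a := fun hh => ha (hh ▸ hbs)
      refine ⟨t \ {a}, ?_, C, fun z hz hzs => hC z hz.1 ?_⟩
      · rw [Set.diff_eq]
        exact inter_mem htm (isOpen_compl_singleton.mem_nhds (by simpa using hba))
      · simp only [Set.mem_insert_iff, not_or]
        exact ⟨by simpa using hz.2, hzs⟩
    by_cases haU : a ∈ U
    · have hsc : IsClosed s := hs.isClosed
      have hUs : IsOpen (U \ s) := hU.sdiff hsc
      have hU' : IsOpen (U \ {a}) := hU.sdiff isClosed_singleton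
      have hset : (U \ {a}) \ s = U \ insert a s := by
        ext z; simp only [mem_diff, mem_singleton_iff, mem_insert_iff]; tauto
      obtain ⟨H', hH'd, hH'e⟩ := IH (U \ {a}) hU' h (by rw [hset]; exact hd)
        (fun b hbs hbV => hb' b hbs hbV.1)
      obtain ⟨t, htm, C, hC⟩ := hb a (Set.mem_insert a s) haU
      have ht₂m : t ∩ (U \ s) ∈ 𝓝 a := inter_mem htm (hUs.mem_nhds ⟨haU, ha⟩)
      have hd2 : DifferentiableOn ℂ H' ((t ∩ (U \ s)) \ {a}) :=
        hH'd.mono (fun z hz => ⟨hz.1.2.1, hz.2⟩)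
      have hbdd : BddAbove ((norm ∘ H') '' ((t ∩ (U \ s)) \ {a})) := by
        refine ⟨C, ?_⟩
        rintro x ⟨z, hz, rfl⟩
        have hz1 : z ∈ (U \ {a}) \ s := ⟨⟨hz.1.2.1, hz.2⟩, hz.1.2.2⟩
        have he : H' z = h z := hH'e hz1
        simp only [Function.comp_apply, he]
        refine hC z hz.1.1 ?_
        simp only [Set.mem_insert_iff, not_or]
        exact ⟨by simpa using hz.2, hz.1.2.2⟩
      have hupd := Complex.differentiableOn_update_limUnder_of_bddAbove ht₂m hd2 hbdd
      refine ⟨Function.update H' a (limUnder (𝓝[≠] a) H'), ?_, ?_⟩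
      · intro x hx
        by_cases hxa : x = a
        · subst hxa
          exact ((hupd x (mem_of_mem_nhds ht₂m)).differentiableAt ht₂m).differentiableWithinAt
        · have h1 : DifferentiableAt ℂ H' x :=
            (hH'd x ⟨hx, hxa⟩).differentiableAt (hU'.mem_nhds ⟨hx, hxa⟩)
          have h2 : Function.update H' a (limUnder (𝓝[≠] a) H') =ᶠ[𝓝 x] H' := by
            filter_upwards [isOpen_compl_singleton.mem_nhds (by simpa using hxa :
              x ∈ ({a}ᶜ : Set ℂ))] with z hz
            exact Function.update_of_ne (by simpa using hz) _ _
          exact (h1.congr_of_eventuallyEq h2).differentiableWithinAt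
      · intro z hz
        have hzne : z ≠ a := fun hh => hz.2 (hh ▸ Set.mem_insert a s)
        rw [Function.update_of_ne hzne]
        exact hH'e ⟨⟨hz.1, hzne⟩, fun hzs => hz.2 (Set.mem_insert_of_mem _ hzs)⟩
    · have he : U \ insert a s = U \ s := by
        ext z
        simp only [mem_diff, mem_insert_iff, not_or]
        constructor
        · rintro ⟨h1, _, h3⟩; exact ⟨h1, h3⟩
        · rintro ⟨h1, h2⟩; exact ⟨h1, fun hh => haU (hh ▸ h1), h2⟩
      obtain ⟨H, h1, h2⟩ := IH U hU h (by rw [← he]; exact hd) hb'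
      exact ⟨H, h1, by rw [he]; exact h2⟩

lemma local_bound {f g : ℂ → ℂ} {c K : ℝ} (hc0 : 0 < c)
    (hbound : ∀ z : ℂ, c ≤ ‖z‖ → ‖z‖ < 1 → ‖f z / g z‖ ≤ K)
    (a : ℂ) (hfa : AnalyticAt ℂ f a) (hga : AnalyticAt ℂ g a)
    (hac : c ≤ ‖a‖) (ha1 : ‖a‖ < 1) :
    ∃ t ∈ 𝓝 a, ∃ C : ℝ, ∀ z ∈ t, z ≠ a → ‖f z / g z‖ ≤ C := by
  have hm : MeromorphicAt (fun z => f z / g z) a := hfa.meromorphicAt.div hga.meromorphicAt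
  have ha0 : a ≠ 0 := by
    intro hh
    rw [hh] at hac
    simp at hac
    linarith
  -- the approximating sequence from outside
  set w : ℕ → ℂ := fun k => ((1 + 1 / ((k : ℝ) + 1) : ℝ) : ℂ) * a with hw
  have hupos : ∀ k : ℕ, 0 < 1 / ((k : ℝ) + 1) := by
    intro k; positivity
  have hw_ne : ∀ k, w k ≠ a := by
    intro k hh
    have h2 : ((1 + 1 / ((k : ℝ) + 1) : ℝ) : ℂ) * a = 1 * a := by rw [one_mul]; exact hh
    have h3 := mul_right_cancel₀ ha0 h2
    have h4 : (1 + 1 / ((k : ℝ) + 1) : ℝ) = 1 := by exact_mod_cast h3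
    have := hupos k
    linarith
  have hw_norm : ∀ k, ‖w k‖ = (1 + 1 / ((k : ℝ) + 1)) * ‖a‖ := by
    intro k
    show ‖((1 + 1 / ((k : ℝ) + 1) : ℝ) : ℂ) * a‖ = _
    rw [norm_mul, Complex.norm_real, Real.norm_of_nonneg (by positivity)]
  have hw_tend : Tendsto w atTop (𝓝 a) := by
    have h0 : Tendsto (fun k : ℕ => 1 / ((k : ℝ) + 1)) atTop (𝓝 0) :=
      tendsto_one_div_add_atTop_nhds_zero_nat
    have h1 : Tendsto (fun k : ℕ => (1 + 1 / ((k : ℝ) + 1) : ℝ)) atTop (𝓝 1) := by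
      have h := h0.const_add (1 : ℝ)
      rwa [add_zero] at h
    have h2 : Tendsto (fun k : ℕ => ((1 + 1 / ((k : ℝ) + 1) : ℝ) : ℂ)) atTop
        (𝓝 (((1 : ℝ) : ℂ))) := (Complex.continuous_ofReal.tendsto 1).comp h1
    have h3 := h2.mul_const a
    rw [Complex.ofReal_one, one_mul] at h3
    exact h3
  have hw_tend' : Tendsto w atTop (𝓝[≠] a) := by
    rw [tendsto_nhdsWithin_iff]
    exact ⟨hw_tend, Eventually.of_forall fun k => by simpa using hw_ne k⟩
  have hw_gt : ∀ k, c < ‖w k‖ := by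
    intro k
    rw [hw_norm k]
    nlinarith [hupos k, hc0]
  have hw_lt1 : ∀ᶠ k in atTop, ‖w k‖ < 1 := by
    have hn : Tendsto (fun k => ‖w k‖) atTop (𝓝 ‖a‖) := (continuous_norm.tendsto a).comp hw_tend
    exact hn.eventually_lt_const ha1
  rcases eq_or_ne (meromorphicOrderAt (fun z => f z / g z) a) ⊤ with htop | hne
  · rw [meromorphicOrderAt_eq_top_iff, eventually_nhdsWithin_iff] at htop
    refine ⟨_, htop, 0, ?_⟩
    intro z hz hza
    have := hz (by simpa using hza)
    rw [this]
    simp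
  · obtain ⟨n, hn⟩ := WithTop.ne_top_iff_exists.mp hne
    obtain ⟨ψ, hψa, hψne, hev⟩ := (meromorphicOrderAt_eq_int_iff hm).mp hn.symm
    rcases le_or_gt 0 n with hn0 | hn0
    · -- nonnegative order: bounded near a
      lift n to ℕ using hn0
      rw [eventually_nhdsWithin_iff] at hev
      have hev2 : ∀ᶠ z in 𝓝 a, ‖ψ z‖ < ‖ψ a‖ + 1 :=
        (hψa.continuousAt.norm.tendsto).eventually_lt_const (by linarith [norm_nonneg (ψ a)])
      have hev3 : ∀ᶠ z in 𝓝 a, ‖z - a‖ ≤ 1 := by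
        have h0 : Tendsto (fun z : ℂ => ‖z - a‖) (𝓝 a) (𝓝 0) := by
          have hcont : Continuous (fun z : ℂ => ‖z - a‖) :=
            (continuous_id.sub continuous_const).norm
          have := hcont.tendsto a
          simpa using this
        filter_upwards [h0.eventually_lt_const one_pos] with z hz using hz.le
      refine ⟨_, hev.and (hev2.and hev3), ‖ψ a‖ + 1, ?_⟩
      rintro z ⟨h1, h2, h3⟩ hza
      have he := h1 (by simpa using hza)
      rw [he, zpow_natCast, smul_eq_mul, norm_mul, norm_pow]
      calc ‖z - a‖ ^ n * ‖ψ z‖ ≤ 1 * (‖ψ a‖ + 1) := by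
            apply mul_le_mul (pow_le_one₀ (norm_nonneg _) h3) h2.le (norm_nonneg _) one_pos.le
        _ = ‖ψ a‖ + 1 := one_mul _
    · -- negative order: contradiction with the annulus bound
      exfalso
      set p : ℕ := (-n).toNat with hp
      have hpn : (p : ℤ) = -n := Int.toNat_of_nonneg (by omega)
      have hp1 : 0 < p := by omega
      have hevk : ∀ᶠ k in atTop, f (w k) / g (w k) = (w k - a) ^ (n : ℤ) • ψ (w k) :=
        hw_tend'.eventually hev
      have hKk : ∀ᶠ k in atTop, ‖f (w k) / g (w k)‖ ≤ K := by
        filter_upwards [hw_lt1] with k h1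
        exact hbound _ (hw_gt k).le h1
      have hψk : ∀ᶠ k in atTop, ‖ψ (w k)‖ ≤ K * ‖w k - a‖ ^ p := by
        filter_upwards [hevk, hKk] with k h1 h2
        have hwa : w k - a ≠ 0 := sub_ne_zero.mpr (hw_ne k)
        have key : ψ (w k) = (w k - a) ^ (p : ℤ) * (f (w k) / g (w k)) := by
          rw [h1, smul_eq_mul, ← mul_assoc, ← zpow_add₀ hwa, hpn]
          simp
        calc ‖ψ (w k)‖ = ‖w k - a‖ ^ p * ‖f (w k) / g (w k)‖ := by
              rw [key, norm_mul, ← zpow_natCast (‖w k - a‖), ← norm_zpow]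
          _ ≤ ‖w k - a‖ ^ p * K := by
              apply mul_le_mul_of_nonneg_left h2 (by positivity)
          _ = K * ‖w k - a‖ ^ p := mul_comm _ _
      have hψtend : Tendsto (fun k => ‖ψ (w k)‖) atTop (𝓝 ‖ψ a‖) :=
        (hψa.continuousAt.tendsto.comp hw_tend).norm
      have hztend : Tendsto (fun k => K * ‖w k - a‖ ^ p) atTop (𝓝 0) := by
        have h0 : Tendsto (fun k => ‖w k - a‖) atTop (𝓝 0) := by
          have := (hw_tend.sub_const a).norm
          simpa using this
        have h1 := h0.pow p
        rw [zero_pow hp1.ne'] at h1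
        simpa using h1.const_mul K
      have hle : ‖ψ a‖ ≤ 0 := le_of_tendsto_of_tendsto hψtend hztend hψk
      exact hψne (norm_le_zero_iff.mp hle)

/-- If `F(c) < 1` and `(f,g)` is an extremal pair for `F(c)`,
then `g` has a zero in `{z : |z| < c}`. -/
theorem stmt1 (c : ℝ) (hc0 : 0 < c) (hc1 : c < 1) (hF : KF c < 1)
    (f g : ℂ → ℂ) (hf : f ∈ sphereA2) (hg : g ∈ sphereA2)
    (hext : ratioSup c f g = KF c) :
    ∃ z : ℂ, ‖z‖ < c ∧ g z = 0 := by
  by_contra hcon'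
  push_neg at hcon'
  have hcon : ∀ z : ℂ, ‖z‖ < c → g z ≠ 0 := fun z hz => hcon' z hz
  -- the constant K
  have hKne : KF c ≠ ⊤ := (hF.trans ENNReal.one_lt_top).ne
  set K : ℝ := (KF c).toReal with hKdef
  have hK0 : (0:ℝ) ≤ K := ENNReal.toReal_nonneg
  have hK1 : K < 1 := by
    have := (ENNReal.toReal_lt_toReal hKne ENNReal.one_ne_top).mpr hF
    simpa using this
  -- the fundamental bound on the annulus
  have hbound : ∀ z : ℂ, c ≤ ‖z‖ → ‖z‖ < 1 → ‖f z / g z‖ ≤ K := by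
    intro z h1 h2
    have hle : (‖f z / g z‖₊ : ℝ≥0∞) ≤ KF c := by
      rw [← hext]
      exact le_iSup₂ (f := fun (z : ℂ) (_ : c ≤ ‖z‖ ∧ ‖z‖ < 1) => (‖f z / g z‖₊ : ℝ≥0∞)) z ⟨h1, h2⟩
    have := ENNReal.toReal_mono hKne hle
    simpa using this
  -- analyticity
  have hgan : AnalyticOnNhd ℂ g (ball (0:ℂ) 1) := hg.1.1.analyticOnNhd isOpen_ball
  have hg00 : g 0 ≠ 0 := hcon 0 (by simpa using hc0)
  have hiso : ∀ x ∈ ball (0:ℂ) 1, ∀ᶠ z in 𝓝[≠] x, g z ≠ 0 := by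
    intro x hx
    by_contra hcc
    rw [Filter.not_eventually] at hcc
    simp only [not_not] at hcc
    have := hgan.eqOn_zero_of_preconnected_of_frequently_eq_zero
      (convex_ball (0:ℂ) 1).isPreconnected hx hcc
    exact hg00 (this (by simpa using hc0))
  -- bound extended across zeros of g via continuity, for c < ‖z‖
  have hb2 : ∀ z : ℂ, c < ‖z‖ → ‖z‖ < 1 → ‖f z‖ ≤ K * ‖g z‖ := by
    intro z hzc hz1
    by_cases hgz : g z = 0
    · have hz1' : z ∈ ball (0:ℂ) 1 := mem_ball_zero_iff.mpr hz1
      have hopen : IsOpen {w : ℂ | c < ‖w‖ ∧ ‖w‖ < 1} :=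
        (isOpen_lt continuous_const continuous_norm).inter
          (isOpen_lt continuous_norm continuous_const)
      have hev : ∀ᶠ w in 𝓝[≠] z, ‖f w‖ ≤ K * ‖g w‖ := by
        filter_upwards [hiso z hz1',
          ((hopen.eventually_mem ⟨hzc, hz1⟩).filter_mono nhdsWithin_le_nhds)] with w hw1 hw2
        have := hbound w hw2.1.le hw2.2
        rw [norm_div] at this
        exact (div_le_iff₀ (norm_pos_iff.mpr hw1)).mp this
      have hfc : ContinuousAt f z :=
        ((hf.1.1 z hz1').differentiableAt (isOpen_ball.mem_nhds hz1')).continuousAt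
      have hgc : ContinuousAt g z :=
        ((hg.1.1 z hz1').differentiableAt (isOpen_ball.mem_nhds hz1')).continuousAt
      have T1 : Tendsto (fun w => ‖f w‖) (𝓝[≠] z) (𝓝 ‖f z‖) :=
        (hfc.norm.tendsto).mono_left nhdsWithin_le_nhds
      have T2 : Tendsto (fun w => K * ‖g w‖) (𝓝[≠] z) (𝓝 (K * ‖g z‖)) :=
        ((hgc.norm.tendsto).const_mul K).mono_left nhdsWithin_le_nhds
      exact le_of_tendsto_of_tendsto T1 T2 hev
    · have := hbound z hzc.le hz1
      rw [norm_div] at this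
      exact (div_le_iff₀ (norm_pos_iff.mpr hgz)).mp this
  -- radii
  set r' : ℝ := (2*c+1)/3 with hr'def
  set r₂ : ℝ := (c+2)/3 with hr₂def
  have hcr' : c < r' := by rw [hr'def]; linarith
  have hr'r₂ : r' < r₂ := by rw [hr'def, hr₂def]; linarith
  have hr₂1 : r₂ < 1 := by rw [hr₂def]; linarith
  have hr'0 : (0:ℝ) < r' := by rw [hr'def]; linarith
  -- zeros of g in the closed ball of radius r₂
  set S : Set ℂ := {z : ℂ | z ∈ closedBall (0:ℂ) r₂ ∧ g z = 0} with hSdef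
  have hsub : closedBall (0:ℂ) r₂ ⊆ ball (0:ℂ) 1 := closedBall_subset_ball hr₂1
  have hclosed : IsClosed S := by
    have hgc : ContinuousOn g (closedBall (0:ℂ) r₂) := (hg.1.1.continuousOn).mono hsub
    have h1 := hgc.preimage_isClosed_of_isClosed Metric.isClosed_closedBall
      (isClosed_singleton (x := (0:ℂ)))
    have h2 : S = closedBall (0:ℂ) r₂ ∩ g ⁻¹' {0} := by
      ext z; simp [hSdef]
    rw [h2]; exact h1
  have hScomp : IsCompact S :=
    (isCompact_closedBall (0:ℂ) r₂).of_isClosed_subset hclosed (fun z hz => hz.1)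
  have hSdisc : DiscreteTopology S := by
    rw [discreteTopology_subtype_iff]
    intro x hx
    have hx1 : x ∈ ball (0:ℂ) 1 := hsub hx.1
    have h1 : {z : ℂ | g z ≠ 0} ∈ 𝓝[≠] x ⊓ 𝓟 S := mem_inf_of_left (hiso x hx1)
    have h2 : S ∈ 𝓝[≠] x ⊓ 𝓟 S := mem_inf_of_right (mem_principal_self S)
    have h3 := Filter.inter_mem h1 h2
    have h4 : {z : ℂ | g z ≠ 0} ∩ S = ∅ := by
      rw [Set.eq_empty_iff_forall_notMem]
      rintro z ⟨hz, hzS⟩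
      exact hz hzS.2
    rw [h4] at h3
    exact Filter.empty_mem_iff_bot.mp h3
  have hSfin : S.Finite := hScomp.finite (isDiscrete_iff_discreteTopology.mpr hSdisc)
  -- extend f/g analytically over the ball of radius r₂
  have hballsub : ball (0:ℂ) r₂ ⊆ ball (0:ℂ) 1 := ball_subset_ball hr₂1.le
  have hnz : ∀ z ∈ ball (0:ℂ) r₂ \ S, g z ≠ 0 := by
    intro z hz hgz
    exact hz.2 ⟨ball_subset_closedBall hz.1, hgz⟩
  obtain ⟨H, hHd, hHe⟩ := extend_lemma S hSfin (ball (0:ℂ) r₂) isOpen_ball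
    (fun z => f z / g z)
    (by
      have hfd : DifferentiableOn ℂ f (ball (0:ℂ) r₂ \ S) :=
        hf.1.1.mono (fun x hx => hballsub hx.1)
      have hgd : DifferentiableOn ℂ g (ball (0:ℂ) r₂ \ S) :=
        hg.1.1.mono (fun x hx => hballsub hx.1)
      exact hfd.div hgd hnz)
    (by
      intro a haS haU
      have h1 : c ≤ ‖a‖ := by
        by_contra hlt
        push_neg at hlt
        exact (hcon a hlt) haS.2
      have h2 : ‖a‖ < 1 := lt_of_le_of_lt (mem_closedBall_zero_iff.mp haS.1) hr₂1
      obtain ⟨t, ht, C, hC⟩ := local_bound hc0 hbound a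
        (hf.1.1.analyticOnNhd isOpen_ball a (mem_ball_zero_iff.mpr h2))
        (hgan a (mem_ball_zero_iff.mpr h2)) h1 h2
      exact ⟨t, ht, C, fun z hz hzS => hC z hz (fun he => hzS (he ▸ haS))⟩)
  -- the extension is bounded by K on the part of the ball with c < ‖z‖
  have hHnorm : ∀ z ∈ ball (0:ℂ) r₂, c < ‖z‖ → ‖H z‖ ≤ K := by
    intro z hz hzc
    by_cases hzS : z ∈ S
    · have hz1 : z ∈ ball (0:ℂ) 1 := hballsub hz
      have hopen : IsOpen {w : ℂ | w ∈ ball (0:ℂ) r₂ ∧ c < ‖w‖} :=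
        isOpen_ball.inter (isOpen_lt continuous_const continuous_norm)
      have hev : ∀ᶠ w in 𝓝[≠] z, ‖H w‖ ≤ K := by
        filter_upwards [hiso z hz1,
          ((hopen.eventually_mem ⟨hz, hzc⟩).filter_mono nhdsWithin_le_nhds)] with w hw1 hw2
        have hwS : w ∉ S := fun hwS => hw1 hwS.2
        rw [hHe ⟨hw2.1, hwS⟩]
        exact hbound w hw2.2.le (lt_trans (mem_ball_zero_iff.mp hw2.1) hr₂1)
      have hHc : ContinuousAt H z :=
        ((hHd z hz).differentiableAt (isOpen_ball.mem_nhds hz)).continuousAt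
      exact le_of_tendsto ((hHc.norm.tendsto).mono_left nhdsWithin_le_nhds) hev
    · rw [hHe ⟨hz, hzS⟩]
      exact hbound z hzc.le (lt_trans (mem_ball_zero_iff.mp hz) hr₂1)
  -- maximum modulus principle on the ball of radius r'
  have hmax : ∀ z : ℂ, ‖z‖ ≤ c → ‖H z‖ ≤ K := by
    intro z hzc
    refine Complex.norm_le_of_forall_mem_frontier_norm_le (U := ball (0:ℂ) r')
      isBounded_ball ?_ ?_ ?_
    · constructor
      · exact hHd.mono (ball_subset_ball hr'r₂.le)
      · refine (hHd.continuousOn).mono ?_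
        rw [closure_ball (0:ℂ) hr'0.ne']
        exact closedBall_subset_ball hr'r₂
    · intro w hw
      rw [frontier_ball (0:ℂ) hr'0.ne'] at hw
      have hwn : ‖w‖ = r' := by simpa using hw
      exact hHnorm w (mem_ball_zero_iff.mpr (by rw [hwn]; exact hr'r₂))
        (by rw [hwn]; exact hcr')
    · rw [closure_ball (0:ℂ) hr'0.ne']
      exact mem_closedBall_zero_iff.mpr (by linarith)
  -- pointwise bound inside the inner disk
  have hinner : ∀ z : ℂ, ‖z‖ < c → ‖f z‖ ≤ K * ‖g z‖ := by
    intro z hzc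
    have hgz := hcon z hzc
    have hz2 : z ∈ ball (0:ℂ) r₂ := mem_ball_zero_iff.mpr (by linarith)
    have hzS : z ∉ S := fun hh => hgz hh.2
    have hh := hmax z hzc.le
    rw [hHe ⟨hz2, hzS⟩, norm_div] at hh
    exact (div_le_iff₀ (norm_pos_iff.mpr hgz)).mp hh
  -- almost-everywhere bound on the unit ball
  have hae : ∀ᵐ z ∂(volume.restrict (ball (0:ℂ) 1)),
      ‖f z‖ ^ 2 ≤ K ^ 2 * ‖g z‖ ^ 2 := by
    have hsph : (volume : Measure ℂ) (sphere (0:ℂ) c) = 0 :=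
      Measure.addHaar_sphere volume 0 c
    have h1 : ∀ᵐ z : ℂ ∂volume, z ∉ sphere (0:ℂ) c := measure_eq_zero_iff_ae_notMem.mp hsph
    have h1' : ∀ᵐ z ∂(volume.restrict (ball (0:ℂ) 1)), z ∉ sphere (0:ℂ) c :=
      ae_restrict_of_ae h1
    have h2 : ∀ᵐ z ∂(volume.restrict (ball (0:ℂ) 1)), z ∈ ball (0:ℂ) 1 :=
      ae_restrict_mem measurableSet_ball
    filter_upwards [h1', h2] with z hz1 hz2
    have hz1' : ‖z‖ ≠ c := fun hh => hz1 (mem_sphere_zero_iff_norm.mpr hh)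
    have hzlt : ‖z‖ < 1 := mem_ball_zero_iff.mp hz2
    have hfg : ‖f z‖ ≤ K * ‖g z‖ := by
      rcases lt_or_gt_of_ne hz1' with hlt | hgt
      · exact hinner z hlt
      · exact hb2 z hgt hzlt
    calc ‖f z‖ ^ 2 ≤ (K * ‖g z‖) ^ 2 := by
          apply pow_le_pow_left₀ (norm_nonneg _) hfg
      _ = K ^ 2 * ‖g z‖ ^ 2 := by ring
  have hgint2 : IntegrableOn (fun z => K ^ 2 * ‖g z‖ ^ 2) (ball (0:ℂ) 1) :=
    hg.1.2.const_mul _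
  have hint : (∫ z in ball (0:ℂ) 1, ‖f z‖ ^ 2) ≤ ∫ z in ball (0:ℂ) 1, K ^ 2 * ‖g z‖ ^ 2 :=
    integral_mono_ae hf.1.2 hgint2 hae
  rw [integral_const_mul] at hint
  have hπ : (0:ℝ) < Real.pi := Real.pi_pos
  have hfint : (1/Real.pi) * ∫ z in ball (0:ℂ) 1, ‖f z‖ ^ 2 = 1 := by
    have hh := hf.2
    unfold bnorm at hh
    exact Real.sqrt_eq_one.mp hh
  have hgint : (1/Real.pi) * ∫ z in ball (0:ℂ) 1, ‖g z‖ ^ 2 = 1 := by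
    have hh := hg.2
    unfold bnorm at hh
    exact Real.sqrt_eq_one.mp hh
  have hstep : (1:ℝ) ≤ K ^ 2 := by
    have h5 := mul_le_mul_of_nonneg_left hint (le_of_lt (by positivity : (0:ℝ) < 1/Real.pi))
    rw [hfint] at h5
    calc (1:ℝ) ≤ 1/Real.pi * (K ^ 2 * ∫ z in ball (0:ℂ) 1, ‖g z‖ ^ 2) := h5
      _ = K ^ 2 * (1/Real.pi * ∫ z in ball (0:ℂ) 1, ‖g z‖ ^ 2) := by ring
      _ = K ^ 2 := by rw [hgint]; ring
  nlinarith [hK0, hK1, hstep]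
end

section
/- Let 0 < c < 1 and suppose F(c) < 1. If (f, g, z₀) is an extremal triple for F(c), i.e., (f,g) is an extremal pair and |f(z₀)/g(z₀)| = F(c) with c ≤ |z₀| < 1 (where f/g is extended analytically across removable singularities, and boundary values are understood as limits), then z₀ lies on the boundary of the annulus A(c,1) = {z : c < |z| < 1}; that is, either |z₀| = c or |z₀| = 1. -/
open MeasureTheory Metric Set
open scoped ENNReal NNReal

lemma bnorm_mul_left (l : ℂ) (g : ℂ → ℂ) :
    Real.sqrt ((1 / Real.pi) * ∫ z in ball (0 : ℂ) 1, ‖l * g z‖ ^ 2) = ‖l‖ * bnorm g := by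
  have : (fun z => ‖l * g z‖ ^ 2) = fun z => ‖l‖ ^ 2 * ‖g z‖ ^ 2 := by
    funext z; rw [norm_mul, mul_pow]
  rw [this, MeasureTheory.integral_const_mul, bnorm]
  rw [show (1 / Real.pi) * (‖l‖ ^ 2 * ∫ z in ball (0:ℂ) 1, ‖g z‖ ^ 2)
      = ‖l‖ ^ 2 * ((1 / Real.pi) * ∫ z in ball (0:ℂ) 1, ‖g z‖ ^ 2) by ring]
  rw [Real.sqrt_mul (sq_nonneg _), Real.sqrt_sq (norm_nonneg _)]

/-- If two unit-sphere functions satisfy `f = l * g` on a small ball inside the unit disk with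
`‖l‖ < 1`, we get a contradiction. -/
lemma aux_contra (f g : ℂ → ℂ) (hf : f ∈ sphereA2) (hg : g ∈ sphereA2)
    (l : ℂ) (hl : ‖l‖ < 1) (w : ℂ) (r : ℝ) (hr : 0 < r)
    (hsub : ball w r ⊆ ball (0 : ℂ) 1)
    (heq : ∀ z ∈ ball w r, f z = l * g z) : False := by
  have hwmem : w ∈ ball (0 : ℂ) 1 := hsub (mem_ball_self hr)
  -- identity theorem: f = l * g on the whole unit ball
  have hφ : DifferentiableOn ℂ (fun z => f z - l * g z) (ball (0 : ℂ) 1) :=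
    hf.1.1.sub ((differentiableOn_const l).mul hg.1.1)
  have hA : AnalyticOnNhd ℂ (fun z => f z - l * g z) (ball (0 : ℂ) 1) :=
    hφ.analyticOnNhd isOpen_ball
  have hev : (fun z => f z - l * g z) =ᶠ[nhds w] 0 := by
    filter_upwards [ball_mem_nhds w hr] with z hz
    simp [heq z hz]
  have hzero : EqOn (fun z => f z - l * g z) 0 (ball (0 : ℂ) 1) :=
    hA.eqOn_zero_of_preconnected_of_eventuallyEq_zero
      (convex_ball (0 : ℂ) 1).isPreconnected hwmem hev
  have heq' : EqOn (fun z => ‖f z‖ ^ 2) (fun z => ‖l * g z‖ ^ 2) (ball (0 : ℂ) 1) := by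
    intro z hz
    have := hzero hz
    simp only [Pi.zero_apply, sub_eq_zero] at this
    simp [this]
  have h1 : bnorm f = ‖l‖ * bnorm g := by
    rw [bnorm, MeasureTheory.setIntegral_congr_fun measurableSet_ball heq', bnorm_mul_left]
  rw [hf.2, hg.2, mul_one] at h1
  exact absurd h1.symm (ne_of_lt hl)

/-- If `F(c) < 1` and `(f,g,z₀)` is an extremal triple for `F(c)`,
then `z₀` lies on the boundary of the annulus: `|z₀| = c` or `|z₀| = 1`. -/
theorem stmt2 (c : ℝ) (hc0 : 0 < c) (hc1 : c < 1) (hF : KF c < 1)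
    (f g : ℂ → ℂ) (hf : f ∈ sphereA2) (hg : g ∈ sphereA2)
    (hext : ratioSup c f g = KF c)
    (z₀ : ℂ) (hz₀c : c ≤ ‖z₀‖) (hz₀1 : ‖z₀‖ < 1)
    (hval : (‖f z₀ / g z₀‖₊ : ℝ≥0∞) = KF c) :
    ‖z₀‖ = c ∨ ‖z₀‖ = 1 := by
  by_contra hcon
  push_neg at hcon
  have hz₀c' : c < ‖z₀‖ := lt_of_le_of_ne hz₀c (Ne.symm hcon.1)
  -- the pointwise bound on the annulus
  have hbound : ∀ z : ℂ, c ≤ ‖z‖ → ‖z‖ < 1 → ‖f z / g z‖ ≤ ‖f z₀ / g z₀‖ := by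
    intro z h1 h2
    have : (‖f z / g z‖₊ : ℝ≥0∞) ≤ ratioSup c f g :=
      le_iSup₂ (f := fun (z : ℂ) (_ : c ≤ ‖z‖ ∧ ‖z‖ < 1) => (‖f z / g z‖₊ : ℝ≥0∞)) z ⟨h1, h2⟩
    rw [hext, ← hval, ENNReal.coe_le_coe] at this
    exact this
  by_cases hgz : g z₀ = 0
  · -- then `KF c = 0`, so `f/g ≡ 0` on the annulus
    have hKF0 : KF c = 0 := by rw [← hval, hgz]; simp
    -- g is not identically zero on the annulus
    have hgne : ∃ w : ℂ, (c < ‖w‖ ∧ ‖w‖ < 1) ∧ g w ≠ 0 := by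
      by_contra hall
      push_neg at hall
      have hA : AnalyticOnNhd ℂ g (ball (0 : ℂ) 1) := hg.1.1.analyticOnNhd isOpen_ball
      set w : ℂ := (((c + 1) / 2 : ℝ) : ℂ)
      have hwn : ‖w‖ = (c + 1) / 2 := by
        rw [Complex.norm_real, Real.norm_eq_abs, abs_of_pos (by linarith)]
      have hwc : c < ‖w‖ := by rw [hwn]; linarith
      have hw1 : ‖w‖ < 1 := by rw [hwn]; linarith
      have hwmem : w ∈ ball (0 : ℂ) 1 := by rwa [mem_ball_zero_iff]
      have hopen : IsOpen {z : ℂ | c < ‖z‖ ∧ ‖z‖ < 1} := by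
        have : {z : ℂ | c < ‖z‖ ∧ ‖z‖ < 1} = (norm ⁻¹' Ioi c) ∩ (norm ⁻¹' Iio 1) := by
          ext z; simp [mem_setOf_eq]
        rw [this]
        exact (isOpen_Ioi.preimage continuous_norm).inter (isOpen_Iio.preimage continuous_norm)
      have hev : g =ᶠ[nhds w] 0 := by
        filter_upwards [hopen.mem_nhds ⟨hwc, hw1⟩] with z hz
        exact hall z ⟨hz.1, hz.2⟩
      have hzero : EqOn g 0 (ball (0 : ℂ) 1) :=
        hA.eqOn_zero_of_preconnected_of_eventuallyEq_zero
          (convex_ball (0 : ℂ) 1).isPreconnected hwmem hev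
      have : bnorm g = 0 := by
        have : EqOn (fun z => ‖g z‖ ^ 2) (fun _ => (0 : ℝ)) (ball (0 : ℂ) 1) := by
          intro z hz; simp [hzero hz]
        rw [bnorm, MeasureTheory.setIntegral_congr_fun measurableSet_ball this]
        simp
      rw [hg.2] at this; norm_num at this
    obtain ⟨w, ⟨hwc, hw1⟩, hgw⟩ := hgne
    -- pick a ball around w inside the annulus where g ≠ 0
    have hwmem : w ∈ ball (0 : ℂ) 1 := by rwa [mem_ball_zero_iff]
    have hgc : ContinuousAt g w :=
      (hg.1.1.differentiableAt (isOpen_ball.mem_nhds hwmem)).continuousAt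
    have hnhds : {z : ℂ | (c < ‖z‖ ∧ ‖z‖ < 1) ∧ g z ≠ 0} ∈ nhds w := by
      have h1 : ∀ᶠ z in nhds w, c < ‖z‖ := continuousAt_const.eventually_lt continuous_norm.continuousAt hwc
      have h2 : ∀ᶠ z in nhds w, ‖z‖ < 1 := continuous_norm.continuousAt.eventually_lt continuousAt_const hw1
      have h3 : ∀ᶠ z in nhds w, g z ≠ 0 := hgc.eventually_ne hgw
      filter_upwards [h1, h2, h3] with z hz1 hz2 hz3
      exact ⟨⟨hz1, hz2⟩, hz3⟩
    obtain ⟨r, hr, hrsub⟩ := Metric.mem_nhds_iff.mp hnhds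
    refine aux_contra f g hf hg 0 (by norm_num) w r hr ?_ ?_
    · intro z hz
      rw [mem_ball_zero_iff]
      exact (hrsub hz).1.2
    · intro z hz
      obtain ⟨⟨hz1, hz2⟩, hz3⟩ := hrsub hz
      have := hbound z hz1.le hz2
      rw [hgz] at this
      simp only [div_zero, norm_zero] at this
      have : f z / g z = 0 := norm_le_zero_iff.mp this
      rw [div_eq_zero_iff] at this
      rcases this with h | h
      · simp [h]
      · exact absurd h hz3
  · -- main case: g z₀ ≠ 0, use the maximum modulus principle
    set l : ℂ := f z₀ / g z₀ with hl
    have hlnorm : ‖l‖ < 1 := by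
      have : (‖l‖₊ : ℝ≥0∞) < 1 := hval ▸ hF
      rw [ENNReal.coe_lt_one_iff] at this
      exact_mod_cast this
    have hz₀mem : z₀ ∈ ball (0 : ℂ) 1 := by rwa [mem_ball_zero_iff]
    have hgc : ContinuousAt g z₀ :=
      (hg.1.1.differentiableAt (isOpen_ball.mem_nhds hz₀mem)).continuousAt
    have hnhds : {z : ℂ | (c < ‖z‖ ∧ ‖z‖ < 1) ∧ g z ≠ 0} ∈ nhds z₀ := by
      have h1 : ∀ᶠ z in nhds z₀, c < ‖z‖ := continuousAt_const.eventually_lt continuous_norm.continuousAt hz₀c'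
      have h2 : ∀ᶠ z in nhds z₀, ‖z‖ < 1 := continuous_norm.continuousAt.eventually_lt continuousAt_const hz₀1
      have h3 : ∀ᶠ z in nhds z₀, g z ≠ 0 := hgc.eventually_ne hgz
      filter_upwards [h1, h2, h3] with z hz1 hz2 hz3
      exact ⟨⟨hz1, hz2⟩, hz3⟩
    obtain ⟨r, hr, hrsub⟩ := Metric.mem_nhds_iff.mp hnhds
    have hsub01 : ball z₀ r ⊆ ball (0 : ℂ) 1 := by
      intro z hz; rw [mem_ball_zero_iff]; exact (hrsub hz).1.2
    have hdiff : DifferentiableOn ℂ (fun z => f z / g z) (ball z₀ r) :=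
      DifferentiableOn.div (hf.1.1.mono hsub01) (hg.1.1.mono hsub01)
        (fun z hz => (hrsub hz).2)
    have hmax : IsMaxOn (norm ∘ fun z => f z / g z) (ball z₀ r) z₀ := by
      intro z hz
      exact hbound z (hrsub hz).1.1.le (hrsub hz).1.2
    have hconst := Complex.eqOn_of_isPreconnected_of_isMaxOn_norm
      (convex_ball z₀ r).isPreconnected isOpen_ball hdiff (mem_ball_self hr) hmax
    refine aux_contra f g hf hg l hlnorm z₀ r hr hsub01 ?_
    intro z hz
    have hz' := hconst hz
    simp only [Function.const_apply] at hz'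
    have hgz' : g z ≠ 0 := (hrsub hz).2
    field_simp at hz'
    rw [hl, div_mul_eq_mul_div, eq_div_iff hgz]
    exact hz'.trans (mul_comm _ _)
end

section
/- F_B is strictly increasing on the interval (κ, 1): if κ < c₁ < c₂ < 1, then F_B(c₁) < F_B(c₂). -/
open MeasureTheory Metric Set
open scoped ENNReal NNReal

open Filter
open scoped Pointwise

lemma rot_inv (h : ℂ → ℂ) (a : Circle) (s : ℝ) :
    ∫ z in ball (0:ℂ) s, h ((a:ℂ) * z) = ∫ z in ball (0:ℂ) s, h z := by
  have hpre : (rotation a) ⁻¹' (ball (0:ℂ) s) = ball (0:ℂ) s := by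
    ext z; simp [rotation_apply, map_zero]
  have := ((rotation a).measurePreserving).setIntegral_preimage_emb
    ((rotation a).toHomeomorph.measurableEmbedding) h (ball (0:ℂ) s)
  rw [hpre] at this
  simpa [rotation_apply] using this

lemma offdiag {n m : ℕ} (hnm : n ≠ m) (s : ℝ) :
    ∫ z in ball (0:ℂ) s, z ^ n * (starRingEnd ℂ z) ^ m = 0 := by
  have hk : ((n:ℝ) - m) ≠ 0 := by
    simp only [sub_ne_zero]
    exact_mod_cast fun h => hnm (Nat.cast_injective h)
  set θ : ℝ := Real.pi / ((n:ℝ) - m) with hθ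
  set a : Circle := Circle.exp θ with ha
  have hc : ((a:ℂ)) ^ n * (starRingEnd ℂ (a:ℂ)) ^ m = -1 := by
    rw [ha, Circle.coe_exp, ← Complex.exp_conj,
      ← Complex.exp_nat_mul, ← Complex.exp_nat_mul, ← Complex.exp_add]
    have h1 : (n:ℂ) * ((θ:ℂ) * Complex.I) + m * (starRingEnd ℂ ((θ:ℂ) * Complex.I))
        = ((n:ℂ) - m) * θ * Complex.I := by
      simp [map_mul, Complex.conj_ofReal, Complex.conj_I]; ring
    rw [h1]
    have hk' : ((n:ℂ) - m) ≠ 0 := by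
      have : (((n:ℝ) - m : ℝ) : ℂ) ≠ 0 := Complex.ofReal_ne_zero.mpr hk
      push_cast at this; exact this
    have h2 : ((n:ℂ) - m) * θ = (Real.pi : ℂ) := by
      rw [hθ]; push_cast; rw [mul_comm, div_mul_cancel₀ _ hk']
    rw [h2, Complex.exp_pi_mul_I]
  have hrot := rot_inv (fun z => z ^ n * (starRingEnd ℂ z) ^ m) a s
  have hneg : ∫ z in ball (0:ℂ) s, ((a:ℂ) * z) ^ n * (starRingEnd ℂ ((a:ℂ) * z)) ^ m
      = - ∫ z in ball (0:ℂ) s, z ^ n * (starRingEnd ℂ z) ^ m := by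
    rw [← integral_neg]
    refine setIntegral_congr_fun measurableSet_ball (fun z _ => ?_)
    simp only [mul_pow, map_mul]
    calc (a:ℂ) ^ n * z ^ n * ((starRingEnd ℂ (a:ℂ)) ^ m * (starRingEnd ℂ z) ^ m)
        = ((a:ℂ) ^ n * (starRingEnd ℂ (a:ℂ)) ^ m) * (z ^ n * (starRingEnd ℂ z) ^ m) := by ring
      _ = -(z ^ n * (starRingEnd ℂ z) ^ m) := by rw [hc]; ring
  have := hrot.symm.trans hneg
  have h2 : (2:ℂ) * ∫ z in ball (0:ℂ) s, z ^ n * (starRingEnd ℂ z) ^ m = 0 := by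
    linear_combination this
  exact (mul_eq_zero.mp h2).resolve_left two_ne_zero

noncomputable def Rn (n : ℕ) (s : ℝ) : ℝ := ∫ z in ball (0:ℂ) s, ‖z‖ ^ (2 * n)

lemma Rn_nonneg (n : ℕ) (s : ℝ) : 0 ≤ Rn n s :=
  setIntegral_nonneg measurableSet_ball fun z _ => by positivity

lemma integrableOn_ball_of_continuous {E : Type*} [NormedAddCommGroup E]
    {h : ℂ → E} (hc : Continuous h) (s : ℝ) : IntegrableOn h (ball (0:ℂ) s) :=
  (hc.continuousOn.integrableOn_compact (isCompact_closedBall _ _)).mono_set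
    ball_subset_closedBall

lemma key_cov (h : ℂ → ℝ) {t : ℝ} (ht : 0 < t) :
    ∫ z in ball (0:ℂ) 1, h (t • z) = (t^2)⁻¹ * ∫ z in ball (0:ℂ) t, h z := by
  rw [MeasureTheory.Measure.setIntegral_comp_smul_of_pos volume h (ball (0:ℂ) 1) ht,
    smul_unitBall_of_pos ht, Complex.finrank_real_complex, smul_eq_mul]

lemma Rn_scale (n : ℕ) {t : ℝ} (ht : 0 < t) : Rn n t = t ^ (2 * n + 2) * Rn n 1 := by
  have h := key_cov (fun z => ‖z‖ ^ (2 * n)) ht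
  have h2 : ∀ z : ℂ, ‖t • z‖ ^ (2 * n) = t ^ (2 * n) * ‖z‖ ^ (2 * n) := fun z => by
    rw [norm_smul, Real.norm_of_nonneg ht.le, mul_pow]
  simp only [h2] at h
  rw [integral_const_mul] at h
  have ht2 : (t:ℝ) ≠ 0 := ht.ne'
  rw [Rn, Rn, pow_add]
  field_simp at h
  linarith [h]

lemma diag (n : ℕ) (s : ℝ) :
    ∫ z in ball (0:ℂ) s, z ^ n * (starRingEnd ℂ z) ^ n = ((Rn n s : ℝ) : ℂ) := by
  have h : ∀ z : ℂ, z ^ n * (starRingEnd ℂ z) ^ n = ((‖z‖ ^ (2*n) : ℝ) : ℂ) := fun z => by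
    rw [← mul_pow, Complex.mul_conj]
    have hns : Complex.normSq z = ‖z‖ ^ 2 := by
      rw [← Complex.sq_norm]
    rw [hns]
    push_cast
    rw [← pow_mul, mul_comm 2 n]
  simp only [h]
  exact integral_ofReal




lemma sum_exp (a : ℕ → ℂ) (N : ℕ) (s : ℝ) :
    ∫ z in ball (0:ℂ) s, ‖∑ n ∈ Finset.range N, a n * z ^ n‖ ^ 2
      = ∑ n ∈ Finset.range N, ‖a n‖ ^ 2 * Rn n s := by
  set S : ℂ → ℂ := fun z => ∑ n ∈ Finset.range N, a n * z ^ n with hS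
  have hScont : Continuous S := by
    apply continuous_finset_sum
    exact fun n _ => (continuous_const.mul (continuous_pow n))
  have hpt : ∀ z : ℂ, (‖S z‖ ^ 2 : ℝ) = (S z * starRingEnd ℂ (S z)).re := by
    intro z
    rw [Complex.mul_conj]
    rw [Complex.ofReal_re, ← Complex.sq_norm]
  -- complex integral
  have hint : ∀ (n m : ℕ), IntegrableOn
      (fun z : ℂ => (a n * z ^ n) * starRingEnd ℂ (a m * z ^ m)) (ball (0:ℂ) s) := by
    intro n m
    exact integrableOn_ball_of_continuous
      ((continuous_const.mul (continuous_pow n)).mul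
        ((continuous_star.comp (continuous_const.mul (continuous_pow m))))) s
  have hexp : ∀ z : ℂ, S z * starRingEnd ℂ (S z)
      = ∑ n ∈ Finset.range N, ∑ m ∈ Finset.range N,
          (a n * z ^ n) * starRingEnd ℂ (a m * z ^ m) := by
    intro z
    rw [hS]
    simp only [map_sum]
    rw [Finset.sum_mul_sum]
  have hJ : (∫ z in ball (0:ℂ) s, S z * starRingEnd ℂ (S z))
      = ((∑ n ∈ Finset.range N, ‖a n‖ ^ 2 * Rn n s : ℝ) : ℂ) := by
    simp only [hexp]
    rw [integral_finset_sum _ (fun n _ => integrable_finset_sum _ (fun m _ => hint n m))]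
    have hterm : ∀ n ∈ Finset.range N,
        (∫ z in ball (0:ℂ) s, ∑ m ∈ Finset.range N, (a n * z ^ n) * starRingEnd ℂ (a m * z ^ m))
          = ((‖a n‖ ^ 2 * Rn n s : ℝ) : ℂ) := by
      intro n hn
      rw [integral_finset_sum _ (fun m _ => hint n m)]
      have hm : ∀ m ∈ Finset.range N,
          (∫ z in ball (0:ℂ) s, (a n * z ^ n) * starRingEnd ℂ (a m * z ^ m))
            = if m = n then ((‖a n‖ ^ 2 * Rn n s : ℝ) : ℂ) else 0 := by
        intro m _
        have : ∀ z : ℂ, (a n * z ^ n) * starRingEnd ℂ (a m * z ^ m)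
            = (a n * starRingEnd ℂ (a m)) * (z ^ n * (starRingEnd ℂ z) ^ m) := by
          intro z; simp only [map_mul, map_pow]; ring
        simp only [this]
        rw [integral_const_mul]
        by_cases hmn : m = n
        · subst hmn
          rw [diag, Complex.mul_conj, if_pos rfl, Complex.normSq_eq_norm_sq]
          push_cast
          ring
        · rw [offdiag (fun h => hmn h.symm), if_neg hmn, mul_zero]
      rw [Finset.sum_congr rfl hm, Finset.sum_ite_eq' (Finset.range N) n
        (fun _ => ((‖a n‖ ^ 2 * Rn n s : ℝ) : ℂ)), if_pos hn]
    rw [Finset.sum_congr rfl hterm]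
    push_cast
    rfl
  have hintS : IntegrableOn (fun z => S z * starRingEnd ℂ (S z)) (ball (0:ℂ) s) :=
    integrableOn_ball_of_continuous (hScont.mul (continuous_star.comp hScont)) s
  calc ∫ z in ball (0:ℂ) s, ‖S z‖ ^ 2
      = ∫ z in ball (0:ℂ) s, (S z * starRingEnd ℂ (S z)).re := by simp only [hpt]
    _ = (∫ z in ball (0:ℂ) s, S z * starRingEnd ℂ (S z)).re := by
        rw [← RCLike.re_to_complex]
        rw [← integral_re hintS]
        rfl
    _ = ∑ n ∈ Finset.range N, ‖a n‖ ^ 2 * Rn n s := by rw [hJ, Complex.ofReal_re]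




lemma mean_mono {f : ℂ → ℂ} (hd : DifferentiableOn ℂ f (ball (0:ℂ) 1))
    (hi : IntegrableOn (fun z => ‖f z‖ ^ 2) (ball (0:ℂ) 1)) {t : ℝ}
    (ht0 : 0 < t) (ht1 : t < 1) :
    ∫ z in ball (0:ℂ) t, ‖f z‖ ^ 2 ≤ t ^ 2 * ∫ z in ball (0:ℂ) 1, ‖f z‖ ^ 2 := by
  set P : ℝ := ∫ z in ball (0:ℂ) 1, ‖f z‖ ^ 2 with hP
  set p : FormalMultilinearSeries ℂ ℂ ℂ := cauchyPowerSeries f 0 ((1:ℝ)/2) with hpdef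
  have hhalf : HasFPowerSeriesOnBall f p 0 ((1/2 : ℝ≥0) : ℝ≥0∞) := by
    have hsub : closedBall (0:ℂ) ((1/2 : ℝ≥0) : ℝ) ⊆ ball (0:ℂ) 1 :=
      closedBall_subset_ball (by norm_num)
    have := (hd.mono hsub).hasFPowerSeriesOnBall (R := (1/2 : ℝ≥0)) (by norm_num)
    have e : ((1:ℝ)/2) = ((1/2:ℝ≥0):ℝ) := by norm_num
    rw [hpdef, e]; exact this
  have hball : ∀ s : ℝ, 0 < s → s < 1 →
      HasFPowerSeriesOnBall f p 0 ((s.toNNReal : ℝ≥0) : ℝ≥0∞) := by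
    intro s hs0 hs1
    have hcs : (s.toNNReal : ℝ) = s := Real.coe_toNNReal s hs0.le
    have hsub : closedBall (0:ℂ) ((s.toNNReal : ℝ≥0) : ℝ) ⊆ ball (0:ℂ) 1 := by
      rw [hcs]; exact closedBall_subset_ball hs1
    have h := (hd.mono hsub).hasFPowerSeriesOnBall (R := s.toNNReal)
      (by simpa [Real.toNNReal_pos] using hs0)
    have heq : cauchyPowerSeries f 0 (s.toNNReal : ℝ≥0) = p :=
      h.hasFPowerSeriesAt.eq_formalMultilinearSeries hhalf.hasFPowerSeriesAt
    rwa [heq] at h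
  set a : ℕ → ℂ := fun n => p.coeff n with ha
  set c : ℕ → ℝ := fun n => ‖a n‖ ^ 2 * Rn n 1 with hc
  have hc0 : ∀ n, 0 ≤ c n := fun n => mul_nonneg (by positivity) (Rn_nonneg n 1)
  have hSeq : ∀ (N : ℕ) (z : ℂ), p.partialSum N z = ∑ n ∈ Finset.range N, a n * z ^ n := by
    intro N z
    unfold FormalMultilinearSeries.partialSum
    refine Finset.sum_congr rfl fun n _ => ?_
    rw [FormalMultilinearSeries.apply_eq_pow_smul_coeff, smul_eq_mul, mul_comm]
  have hconv : ∀ s : ℝ, 0 < s → s < 1 →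
      Tendsto (fun N => ∑ n ∈ Finset.range N, c n * s ^ (2 * n + 2)) atTop
        (nhds (∫ z in ball (0:ℂ) s, ‖f z‖ ^ 2)) := by
    intro s hs0 hs1
    have hTS : ∀ N, ∑ n ∈ Finset.range N, c n * s ^ (2 * n + 2)
        = ∫ z in ball (0:ℂ) s, ‖p.partialSum N z‖ ^ 2 := by
      intro N
      have h1 := sum_exp a N s
      simp only [hSeq]
      rw [h1]
      refine Finset.sum_congr rfl fun n _ => ?_
      rw [hc, Rn_scale n hs0]; ring
    simp only [hTS]
    -- midpoint radius
    set s' : ℝ := (s + 1) / 2 with hs'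
    have hs'0 : 0 < s' := by positivity
    have hs'1 : s' < 1 := by linarith
    have hss' : s < s' := by linarith
    have hu := (hball s' hs'0 hs'1).tendstoUniformlyOn
      (r' := s.toNNReal) (by
        rw [ENNReal.coe_lt_coe]
        exact_mod_cast (by simp [Real.coe_toNNReal, hs0.le, hs'0.le, hss'] :
          (s.toNNReal : ℝ) < (s'.toNNReal : ℝ)))
    rw [Metric.tendstoUniformlyOn_iff] at hu
    have hcs : (s.toNNReal : ℝ) = s := Real.coe_toNNReal s hs0.le
    rw [hcs] at hu
    -- bound for f on closed ball s
    obtain ⟨M, hM⟩ := (isCompact_closedBall (0:ℂ) s).exists_bound_of_continuousOn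
      (hd.continuousOn.mono (closedBall_subset_ball hs1))
    set M₀ : ℝ := max M 0 with hM₀
    have hM₀0 : 0 ≤ M₀ := le_max_right _ _
    have hMf : ∀ z ∈ ball (0:ℂ) s, ‖f z‖ ≤ M₀ :=
      fun z hz => le_trans (hM z (ball_subset_closedBall hz)) (le_max_left _ _)
    set V : ℝ := (volume (ball (0:ℂ) s)).toReal with hV
    have hV0 : 0 ≤ V := ENNReal.toReal_nonneg
    rw [Metric.tendsto_atTop]
    intro ε hε
    set δ : ℝ := min 1 (ε / ((2 * M₀ + 1) * (V + 1))) with hδdef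
    have hδ0 : 0 < δ := by
      apply lt_min one_pos
      apply div_pos hε
      positivity
    have hδ1 : δ ≤ 1 := min_le_left _ _
    have hδ2 : δ ≤ ε / ((2 * M₀ + 1) * (V + 1)) := min_le_right _ _
    simp only [zero_add] at hu
    obtain ⟨N₀, hN₀⟩ := eventually_atTop.mp (hu δ hδ0)
    refine ⟨N₀, fun n hn => ?_⟩
    have hSint : IntegrableOn (fun z => ‖p.partialSum n z‖ ^ 2) (ball (0:ℂ) s) :=
      integrableOn_ball_of_continuous ((p.partialSum_continuous n).norm.pow 2) s
    have hfint : IntegrableOn (fun z => ‖f z‖ ^ 2) (ball (0:ℂ) s) :=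
      hi.mono_set (ball_subset_ball hs1.le)
    have hdiff : (∫ z in ball (0:ℂ) s, ‖p.partialSum n z‖ ^ 2)
        - ∫ z in ball (0:ℂ) s, ‖f z‖ ^ 2
        = ∫ z in ball (0:ℂ) s, (‖p.partialSum n z‖ ^ 2 - ‖f z‖ ^ 2) :=
      (integral_sub hSint hfint).symm
    have hbound : ∀ z ∈ ball (0:ℂ) s,
        ‖‖p.partialSum n z‖ ^ 2 - ‖f z‖ ^ 2‖ ≤ δ * (2 * M₀ + 1) := by
      intro z hz
      have h1 : dist (f z) (p.partialSum n z) < δ := hN₀ n hn z hz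
      have h2 : ‖f z‖ ≤ M₀ := hMf z hz
      have h3 : |‖p.partialSum n z‖ - ‖f z‖| ≤ δ := by
        have := abs_norm_sub_norm_le (p.partialSum n z) (f z)
        rw [dist_comm, dist_eq_norm] at h1
        linarith [this]
      have h4 : (0:ℝ) ≤ ‖f z‖ := norm_nonneg _
      have h5 : (0:ℝ) ≤ ‖p.partialSum n z‖ := norm_nonneg _
      obtain ⟨h3a, h3b⟩ := abs_le.mp h3
      have hsum : ‖p.partialSum n z‖ + ‖f z‖ ≤ 2 * M₀ + 1 := by linarith
      have hfac : ‖p.partialSum n z‖ ^ 2 - ‖f z‖ ^ 2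
          = (‖p.partialSum n z‖ - ‖f z‖) * (‖p.partialSum n z‖ + ‖f z‖) := by ring
      rw [Real.norm_eq_abs, hfac, abs_mul,
        abs_of_nonneg (by positivity : (0:ℝ) ≤ ‖p.partialSum n z‖ + ‖f z‖)]
      exact mul_le_mul h3 hsum (by positivity) hδ0.le
    have hIbound : ‖∫ z in ball (0:ℂ) s, (‖p.partialSum n z‖ ^ 2 - ‖f z‖ ^ 2)‖
        ≤ δ * (2 * M₀ + 1) * V := by
      refine (norm_setIntegral_le_of_norm_le_const measure_ball_lt_top hbound).trans_eq ?_
      rfl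
    rw [Real.dist_eq, ← Real.norm_eq_abs, hdiff]
    refine lt_of_le_of_lt hIbound ?_
    have hfact : (0:ℝ) < (2 * M₀ + 1) * (V + 1) := by positivity
    have h6 : δ * ((2 * M₀ + 1) * (V + 1)) ≤ ε := (le_div_iff₀ hfact).mp hδ2
    have h7 : δ * (2 * M₀ + 1) * V < δ * ((2 * M₀ + 1) * (V + 1)) := by
      have : δ * ((2 * M₀ + 1) * (V + 1)) - δ * (2 * M₀ + 1) * V = δ * (2 * M₀ + 1) := by ring
      nlinarith [mul_pos hδ0 (by positivity : (0:ℝ) < 2 * M₀ + 1)]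
    linarith
  -- each partial sum bounded by integral over ball s, which is ≤ P
  have hmono : ∀ s : ℝ, Monotone (fun N => ∑ n ∈ Finset.range N, c n * s ^ (2 * n + 2)) := by
    intro s N M hNM
    have hev : ∀ n : ℕ, (0:ℝ) ≤ s ^ (2 * n + 2) := fun n =>
      Even.pow_nonneg ⟨n + 1, by ring⟩ s
    refine Finset.sum_le_sum_of_subset_of_nonneg (Finset.range_subset_range.mpr hNM) ?_
    intro n _ _
    exact mul_nonneg (hc0 n) (hev n)
  have hQP : ∀ s : ℝ, 0 < s → s < 1 → (∫ z in ball (0:ℂ) s, ‖f z‖ ^ 2) ≤ P := by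
    intro s hs0 hs1
    refine setIntegral_mono_set hi ?_ ?_
    · exact Eventually.of_forall fun z => by positivity
    · exact HasSubset.Subset.eventuallyLE (ball_subset_ball hs1.le)
  have hNB : ∀ (N : ℕ) (s : ℝ), 0 < s → s < 1 →
      ∑ n ∈ Finset.range N, c n * s ^ (2 * n + 2) ≤ P := by
    intro N s hs0 hs1
    exact le_trans ((hmono s).ge_of_tendsto (hconv s hs0 hs1) N) (hQP s hs0 hs1)
  have hsum1 : ∀ N : ℕ, ∑ n ∈ Finset.range N, c n ≤ P := by
    intro N
    have hcont : Tendsto (fun s : ℝ => ∑ n ∈ Finset.range N, c n * s ^ (2 * n + 2))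
        (nhdsWithin 1 (Iio 1)) (nhds (∑ n ∈ Finset.range N, c n)) := by
      have hcts : Continuous (fun s : ℝ => ∑ n ∈ Finset.range N, c n * s ^ (2 * n + 2)) := by
        apply continuous_finset_sum
        exact fun n _ => continuous_const.mul (continuous_pow _)
      have := (hcts.tendsto (1:ℝ)).mono_left (nhdsWithin_le_nhds (s := Iio (1:ℝ)))
      simpa using this
    refine le_of_tendsto hcont ?_
    filter_upwards [Ioo_mem_nhdsLT_of_mem (by constructor <;> norm_num :
      (1:ℝ) ∈ Ioc (0:ℝ) 1)] with s hs
    exact hNB N s hs.1 hs.2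
  refine le_of_tendsto (hconv t ht0 ht1) (Eventually.of_forall fun N => ?_)
  have hstep : ∀ n : ℕ, c n * t ^ (2 * n + 2) ≤ c n * t ^ 2 := by
    intro n
    have : t ^ (2 * n + 2) = t ^ (2 * n) * t ^ 2 := by rw [pow_add]
    rw [this]
    have h1 : t ^ (2 * n) ≤ 1 := pow_le_one₀ ht0.le ht1.le
    have h2 : (0:ℝ) ≤ t ^ 2 := by positivity
    calc c n * (t ^ (2 * n) * t ^ 2) ≤ c n * (1 * t ^ 2) := by
          apply mul_le_mul_of_nonneg_left _ (hc0 n)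
          exact mul_le_mul_of_nonneg_right h1 h2
      _ = c n * t ^ 2 := by ring
  calc ∑ n ∈ Finset.range N, c n * t ^ (2 * n + 2)
      ≤ ∑ n ∈ Finset.range N, c n * t ^ 2 := Finset.sum_le_sum fun n _ => hstep n
    _ = (∑ n ∈ Finset.range N, c n) * t ^ 2 := by rw [← Finset.sum_mul]
    _ ≤ P * t ^ 2 := mul_le_mul_of_nonneg_right (hsum1 N) (by positivity)
    _ = t ^ 2 * P := mul_comm _ _

lemma integrableOn_ball_of_continuous' {E : Type*} [NormedAddCommGroup E]
    {h : ℂ → E} (hc : Continuous h) (s : ℝ) : IntegrableOn h (ball (0:ℂ) s) :=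
  (hc.continuousOn.integrableOn_compact (isCompact_closedBall _ _)).mono_set
    ball_subset_closedBall

lemma sqint_nonneg (f : ℂ → ℂ) (s : ℝ) : 0 ≤ ∫ z in ball (0:ℂ) s, ‖f z‖ ^ 2 :=
  setIntegral_nonneg measurableSet_ball fun z _ => by positivity

lemma bnorm_sq (f : ℂ → ℂ) :
    bnorm f ^ 2 = (1 / Real.pi) * ∫ z in ball (0 : ℂ) 1, ‖f z‖ ^ 2 := by
  rw [bnorm, Real.sq_sqrt]
  exact mul_nonneg (by positivity) (sqint_nonneg f 1)

lemma bnorm_nonneg (f : ℂ → ℂ) : 0 ≤ bnorm f := Real.sqrt_nonneg _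

-- dilation of a memA2 function
lemma dilate_memA2 {h : ℂ → ℂ} (hm : memA2 h) {t : ℝ} (ht0 : 0 < t) (ht1 : t < 1) :
    memA2 (fun z => h ((t:ℂ) * z)) := by
  constructor
  · refine DifferentiableOn.comp hm.1 ?_ ?_
    · exact (differentiable_const ((t:ℂ))).mul differentiable_id |>.differentiableOn
    · intro z hz
      rw [mem_ball_zero_iff] at hz ⊢
      rw [norm_mul, Complex.norm_real, Real.norm_of_nonneg ht0.le]
      calc t * ‖z‖ ≤ t * 1 := by
            exact mul_le_mul_of_nonneg_left hz.le ht0.le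
        _ < 1 := by linarith
  · have hcont : ContinuousOn (fun z : ℂ => ‖h ((t:ℂ) * z)‖ ^ 2) (closedBall (0:ℂ) 1) := by
      refine (ContinuousOn.norm ?_).pow 2
      refine hm.1.continuousOn.comp ((continuous_const.mul continuous_id).continuousOn) ?_
      intro z hz
      rw [mem_closedBall_zero_iff] at hz
      rw [mem_ball_zero_iff, norm_mul, Complex.norm_real, Real.norm_of_nonneg ht0.le]
      calc t * ‖z‖ ≤ t * 1 := mul_le_mul_of_nonneg_left hz ht0.le
        _ < 1 := by linarith
    exact (hcont.integrableOn_compact (isCompact_closedBall _ _)).mono_set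
      ball_subset_closedBall

lemma dilate_int {h : ℂ → ℂ} {t : ℝ} (ht0 : 0 < t) :
    ∫ z in ball (0:ℂ) 1, ‖h ((t:ℂ) * z)‖ ^ 2 = (t^2)⁻¹ * ∫ z in ball (0:ℂ) t, ‖h z‖ ^ 2 := by
  have := key_cov (fun w => ‖h w‖ ^ 2) ht0
  simp only [Complex.real_smul] at this
  exact this

lemma dilate_bnorm {h : ℂ → ℂ} (hm : memA2 h) {t : ℝ} (ht0 : 0 < t) (ht1 : t < 1) :
    bnorm (fun z => h ((t:ℂ) * z)) ≤ bnorm h := by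
  rw [bnorm, bnorm]
  apply Real.sqrt_le_sqrt
  apply mul_le_mul_of_nonneg_left _ (by positivity)
  rw [dilate_int ht0]
  have := mean_mono hm.1 hm.2 ht0 ht1
  have ht2 : (0:ℝ) < t ^ 2 := by positivity
  rw [inv_mul_le_iff₀ ht2]
  linarith [this]

lemma KFB_bddAbove (c : ℝ) :
    BddAbove {x : ℝ | ∃ f g : ℂ → ℂ, FGpair c f g ∧ x = bnorm f ^ 2 - bnorm g ^ 2} := by
  refine ⟨1, fun x hx => ?_⟩
  obtain ⟨f, g, hFG, rfl⟩ := hx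
  have h1 : bnorm f ^ 2 ≤ 1 := by
    have := hFG.2.2.1
    nlinarith [bnorm_nonneg f]
  have h2 : 0 ≤ bnorm g ^ 2 := by positivity
  linarith

lemma KFB_nonempty (c : ℝ) :
    Set.Nonempty {x : ℝ | ∃ f g : ℂ → ℂ, FGpair c f g ∧ x = bnorm f ^ 2 - bnorm g ^ 2} := by
  have hz : memA2 (fun _ : ℂ => (0:ℂ)) :=
    ⟨differentiableOn_const 0, by
      simp only [norm_zero]
      exact integrableOn_const measure_ball_lt_top.ne⟩
  have hb : bnorm (fun _ : ℂ => (0:ℂ)) = 0 := by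
    rw [bnorm]
    norm_num
  exact ⟨0, (fun _ => 0), (fun _ => 0),
    ⟨hz, hz, by rw [hb]; norm_num, by rw [hb]; norm_num, fun z _ _ => le_rfl⟩, by rw [hb]; ring⟩

/-- `F_B` is strictly increasing on `(κ, 1)`. -/
theorem stmt8 (κ : ℝ) (hκ0 : 0 < κ) (hκ1 : κ < 1)
    (hzero : ∀ c : ℝ, 0 < c → c ≤ κ → KFB c = 0)
    (hpos : ∀ c : ℝ, κ < c → c < 1 → 0 < KFB c)
    (c₁ c₂ : ℝ) (hc₁ : κ < c₁) (hc₁₂ : c₁ < c₂) (hc₂ : c₂ < 1) :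
    KFB c₁ < KFB c₂ := by
  have hπ : (0:ℝ) < Real.pi := Real.pi_pos
  have h0c1 : 0 < c₁ := hκ0.trans hc₁
  have h0c2 : 0 < c₂ := h0c1.trans hc₁₂
  set t : ℝ := c₁ / c₂ with htdef
  have ht0 : 0 < t := div_pos h0c1 h0c2
  have ht1 : t < 1 := (div_lt_one h0c2).mpr hc₁₂
  have htc1 : c₁ ≤ t := by
    rw [htdef, le_div_iff₀ h0c2]
    nlinarith
  have htc2 : t * c₂ = c₁ := by
    rw [htdef]
    exact div_mul_cancel₀ c₁ h0c2.ne'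
  -- main step : every element of S c₁ is ≤ t^2 * KFB c₂
  have key : ∀ x ∈ {x : ℝ | ∃ f g : ℂ → ℂ, FGpair c₁ f g ∧ x = bnorm f ^ 2 - bnorm g ^ 2},
      x ≤ t ^ 2 * KFB c₂ := by
    rintro x ⟨f, g, hFG, rfl⟩
    obtain ⟨hf, hg, hbf, hbg, hfg⟩ := hFG
    set F : ℂ → ℂ := fun z => f ((t:ℂ) * z) with hF
    set G : ℂ → ℂ := fun z => g ((t:ℂ) * z) with hG
    have hpair : FGpair c₂ F G := by
      refine ⟨dilate_memA2 hf ht0 ht1, dilate_memA2 hg ht0 ht1,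
        le_trans (dilate_bnorm hf ht0 ht1) hbf,
        le_trans (dilate_bnorm hg ht0 ht1) hbg, ?_⟩
      intro z hz1 hz2
      have hnorm : ‖(t:ℂ) * z‖ = t * ‖z‖ := by
        rw [norm_mul, Complex.norm_real, Real.norm_of_nonneg ht0.le]
      refine hfg ((t:ℂ) * z) ?_ ?_
      · rw [hnorm, ← htc2]
        exact mul_le_mul_of_nonneg_left hz1 ht0.le
      · rw [hnorm]
        calc t * ‖z‖ ≤ t * 1 := mul_le_mul_of_nonneg_left hz2.le ht0.le
          _ < 1 := by linarith
    have hymem : bnorm F ^ 2 - bnorm G ^ 2 ∈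
        {x : ℝ | ∃ f g : ℂ → ℂ, FGpair c₂ f g ∧ x = bnorm f ^ 2 - bnorm g ^ 2} :=
      ⟨F, G, hpair, rfl⟩
    have hyle : bnorm F ^ 2 - bnorm G ^ 2 ≤ KFB c₂ := le_csSup (KFB_bddAbove c₂) hymem
    -- the value inequality
    have hQf : (∫ z in ball (0:ℂ) 1, ‖f z‖ ^ 2) - ∫ z in ball (0:ℂ) t, ‖f z‖ ^ 2
        = ∫ z in ball (0:ℂ) 1 \ ball (0:ℂ) t, ‖f z‖ ^ 2 :=
      (integral_diff measurableSet_ball hf.2 (ball_subset_ball ht1.le)).symm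
    have hQg : (∫ z in ball (0:ℂ) 1, ‖g z‖ ^ 2) - ∫ z in ball (0:ℂ) t, ‖g z‖ ^ 2
        = ∫ z in ball (0:ℂ) 1 \ ball (0:ℂ) t, ‖g z‖ ^ 2 :=
      (integral_diff measurableSet_ball hg.2 (ball_subset_ball ht1.le)).symm
    have hann : ∫ z in ball (0:ℂ) 1 \ ball (0:ℂ) t, ‖f z‖ ^ 2
        ≤ ∫ z in ball (0:ℂ) 1 \ ball (0:ℂ) t, ‖g z‖ ^ 2 := by
      refine setIntegral_mono_on (hf.2.mono_set diff_subset) (hg.2.mono_set diff_subset)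
        (measurableSet_ball.diff measurableSet_ball) ?_
      intro z hz
      obtain ⟨hz1, hz2⟩ := hz
      rw [mem_ball_zero_iff] at hz1
      rw [mem_ball_zero_iff] at hz2
      push_neg at hz2
      have hle : ‖f z‖ ≤ ‖g z‖ := hfg z (le_trans htc1 hz2) hz1
      exact pow_le_pow_left₀ (norm_nonneg _) hle 2
    have hFval : bnorm F ^ 2 = (1 / Real.pi) * ((t^2)⁻¹ * ∫ z in ball (0:ℂ) t, ‖f z‖ ^ 2) := by
      rw [bnorm_sq, hF]
      congr 1
      exact dilate_int ht0
    have hGval : bnorm G ^ 2 = (1 / Real.pi) * ((t^2)⁻¹ * ∫ z in ball (0:ℂ) t, ‖g z‖ ^ 2) := by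
      rw [bnorm_sq, hG]
      congr 1
      exact dilate_int ht0
    have hxval : bnorm f ^ 2 - bnorm g ^ 2
        = (1 / Real.pi) * ((∫ z in ball (0:ℂ) 1, ‖f z‖ ^ 2) - ∫ z in ball (0:ℂ) 1, ‖g z‖ ^ 2) := by
      rw [bnorm_sq, bnorm_sq]; ring
    have hmain : bnorm f ^ 2 - bnorm g ^ 2 ≤ t ^ 2 * (bnorm F ^ 2 - bnorm G ^ 2) := by
      rw [hxval, hFval, hGval]
      have ht2 : (0:ℝ) < t ^ 2 := by positivity
      have hcore : (∫ z in ball (0:ℂ) 1, ‖f z‖ ^ 2) - ∫ z in ball (0:ℂ) 1, ‖g z‖ ^ 2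
          ≤ (∫ z in ball (0:ℂ) t, ‖f z‖ ^ 2) - ∫ z in ball (0:ℂ) t, ‖g z‖ ^ 2 := by
        linarith [hQf, hQg, hann]
      have hπinv : (0:ℝ) < 1 / Real.pi := by positivity
      calc (1 / Real.pi) * ((∫ z in ball (0:ℂ) 1, ‖f z‖ ^ 2) - ∫ z in ball (0:ℂ) 1, ‖g z‖ ^ 2)
          ≤ (1 / Real.pi) * ((∫ z in ball (0:ℂ) t, ‖f z‖ ^ 2) - ∫ z in ball (0:ℂ) t, ‖g z‖ ^ 2) :=
            mul_le_mul_of_nonneg_left hcore hπinv.le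
        _ = t ^ 2 * ((1 / Real.pi) * ((t^2)⁻¹ * ∫ z in ball (0:ℂ) t, ‖f z‖ ^ 2)
              - (1 / Real.pi) * ((t^2)⁻¹ * ∫ z in ball (0:ℂ) t, ‖g z‖ ^ 2)) := by
            field_simp
    calc bnorm f ^ 2 - bnorm g ^ 2 ≤ t ^ 2 * (bnorm F ^ 2 - bnorm G ^ 2) := hmain
      _ ≤ t ^ 2 * KFB c₂ := mul_le_mul_of_nonneg_left hyle (by positivity)
  have hle : KFB c₁ ≤ t ^ 2 * KFB c₂ := csSup_le (KFB_nonempty c₁) key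
  have hk2 : 0 < KFB c₂ := hpos c₂ (hc₁.trans hc₁₂) hc₂
  have ht2lt : t ^ 2 < 1 := by nlinarith
  calc KFB c₁ ≤ t ^ 2 * KFB c₂ := hle
    _ < 1 * KFB c₂ := mul_lt_mul_of_pos_right ht2lt hk2
    _ = KFB c₂ := one_mul _
end

section
/- For polynomials of degree at most 1, Korenblum's function is given explicitly by: F₁(c) = 1 if 0 < c ≤ 1/√2, and F₁(c) = 1/(√2 c) if 1/√2 < c < 1. In particular, the Korenblum constant for degree-1 polynomials is κ₁ = 1/√2. -/
open MeasureTheory Metric Set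
open scoped ENNReal NNReal

section KorenblumAux
open scoped Real

lemma setint_neg (f : ℂ → ℝ) : ∫ z in ball (0:ℂ) 1, f (-z) = ∫ z in ball (0:ℂ) 1, f z := by
  rw [← integral_indicator measurableSet_ball, ← integral_indicator measurableSet_ball]
  have : (ball (0:ℂ) 1).indicator (fun z => f (-z)) =
      fun z => (ball (0:ℂ) 1).indicator f (-z) := by
    funext z
    by_cases h : z ∈ ball (0:ℂ) 1
    · have h' : -z ∈ ball (0:ℂ) 1 := by simpa [mem_ball, dist_eq_norm] using h
      simp [indicator_of_mem, h, h']
    · have h' : -z ∉ ball (0:ℂ) 1 := by simpa [mem_ball, dist_eq_norm] using h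
      simp [indicator_of_notMem, h, h']
  rw [this, integral_neg_eq_self]

lemma int_norm_sq_ball : ∫ z in ball (0:ℂ) 1, ‖z‖^2 = π/2 := by
  rw [← integral_indicator measurableSet_ball,
    ← Complex.integral_comp_polarCoord_symm]
  have h1 : ∀ p ∈ polarCoord.target,
      p.1 • (ball (0:ℂ) 1).indicator (fun z => ‖z‖^2) (Complex.polarCoord.symm p)
        = (Ioo (0:ℝ) 1 ×ˢ Ioo (-π) π).indicator (fun p : ℝ × ℝ => p.1 ^ 3) p := by
    intro p hp
    rw [polarCoord_target] at hp
    have hp1 : 0 < p.1 := hp.1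
    have hnorm : ‖Complex.polarCoord.symm p‖ = p.1 := by
      rw [Complex.norm_polarCoord_symm, abs_of_pos hp1]
    by_cases h : p.1 < 1
    · rw [indicator_of_mem (by rw [mem_ball_zero_iff, hnorm]; exact h),
        indicator_of_mem (by exact ⟨⟨hp1, h⟩, hp.2⟩)]
      simp only [smul_eq_mul, hnorm]; ring
    · rw [indicator_of_notMem (by rw [mem_ball_zero_iff, hnorm]; exact h),
        indicator_of_notMem (by simp [mem_prod]; intro h1 h2; exact absurd h2 h)]
      simp
  rw [setIntegral_congr_fun (by exact measurableSet_Ioi.prod measurableSet_Ioo :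
      MeasurableSet polarCoord.target) h1]
  rw [setIntegral_indicator ((measurableSet_Ioo).prod measurableSet_Ioo)]
  have hinter : polarCoord.target ∩ (Ioo (0:ℝ) 1 ×ˢ Ioo (-π) π) = Ioo (0:ℝ) 1 ×ˢ Ioo (-π) π := by
    rw [polarCoord_target, prod_inter_prod]
    congr 1
    · exact inter_eq_right.2 (fun x hx => hx.1)
    · exact inter_self _
  rw [hinter]
  rw [Measure.volume_eq_prod]
  have hpm := MeasureTheory.setIntegral_prod_mul (μ := (volume : Measure ℝ))
      (ν := (volume : Measure ℝ)) (fun r : ℝ => r ^ 3) (fun _ : ℝ => (1:ℝ))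
      (Ioo (0:ℝ) 1) (Ioo (-π) π)
  have h3 : ∫ r in Ioo (0:ℝ) 1, r ^ 3 = 1/4 := by
    rw [← integral_Ioc_eq_integral_Ioo, ← intervalIntegral.integral_of_le zero_le_one]
    norm_num [integral_pow]
  have h4 : ∫ _x in Ioo (-π) π, (1:ℝ) = 2 * π := by
    simp [Real.pi_pos.le]
    rw [two_mul]
  simp only [mul_one] at hpm
  refine Eq.trans hpm ?_
  rw [h3, h4]; ring

lemma cont_intOn {f : ℂ → ℝ} (hf : Continuous f) : IntegrableOn f (ball (0:ℂ) 1) volume :=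
  (hf.continuousOn.integrableOn_compact (isCompact_closedBall 0 1)).mono_set ball_subset_closedBall

lemma vol_ball_toReal : (volume (ball (0:ℂ) 1)).toReal = π := by
  rw [Complex.volume_ball]
  simp

lemma int_affine (a b : ℂ) :
    ∫ z in ball (0:ℂ) 1, ‖a + b*z‖^2 = π * ‖a‖^2 + π/2 * ‖b‖^2 := by
  have hpar : ∀ z : ℂ, ‖a + b*z‖^2 + ‖a + b*(-z)‖^2 = 2*‖a‖^2 + 2*‖b‖^2*‖z‖^2 := by
    intro z
    have := parallelogram_law_with_norm ℝ a (b*z)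
    have hb : ‖b*z‖ = ‖b‖*‖z‖ := norm_mul b z
    rw [hb] at this
    rw [mul_neg, ← sub_eq_add_neg]
    nlinarith [this]
  have hi : IntegrableOn (fun z : ℂ => ‖a + b*z‖^2) (ball (0:ℂ) 1) volume :=
    cont_intOn (by continuity)
  have hi2 : IntegrableOn (fun z : ℂ => ‖a + b*(-z)‖^2) (ball (0:ℂ) 1) volume :=
    cont_intOn (by continuity)
  have hsum : (∫ z in ball (0:ℂ) 1, ‖a + b*z‖^2) + (∫ z in ball (0:ℂ) 1, ‖a + b*(-z)‖^2)
      = ∫ z in ball (0:ℂ) 1, (2*‖a‖^2 + 2*‖b‖^2*‖z‖^2) := by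
    rw [← integral_add hi hi2]
    exact setIntegral_congr_fun measurableSet_ball (fun z _ => hpar z)
  have hneg : (∫ z in ball (0:ℂ) 1, ‖a + b*(-z)‖^2) = ∫ z in ball (0:ℂ) 1, ‖a + b*z‖^2 :=
    setint_neg (fun z => ‖a + b*z‖^2)
  have hrhs : (∫ z in ball (0:ℂ) 1, (2*‖a‖^2 + 2*‖b‖^2*‖z‖^2))
      = 2*‖a‖^2 * π + 2*‖b‖^2 * (π/2) := by
    rw [integral_add ((show Integrable (fun _ : ℂ => 2*‖a‖^2) (volume.restrict (ball (0:ℂ) 1)) from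
          integrableOn_const measure_ball_lt_top.ne enorm_ne_top))
        ((cont_intOn (by continuity)).const_mul _)]
    rw [integral_const, integral_const_mul, measureReal_restrict_apply_univ, measureReal_def, vol_ball_toReal,
      int_norm_sq_ball, smul_eq_mul]
    ring
  rw [hneg] at hsum
  rw [hrhs] at hsum
  linarith

lemma bnorm_affine (a b : ℂ) :
    bnorm (fun z => a + b*z) = Real.sqrt (‖a‖^2 + ‖b‖^2/2) := by
  unfold bnorm
  rw [int_affine]
  congr 1
  have : (π:ℝ) ≠ 0 := Real.pi_ne_zero
  field_simp

lemma coeffs_of_bnorm_one (a b : ℂ) (h : bnorm (fun z => a + b*z) = 1) :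
    ‖a‖^2 + ‖b‖^2/2 = 1 := by
  rw [bnorm_affine] at h
  exact Real.sqrt_eq_one.1 h

lemma le_ratioSup (c : ℝ) (f g : ℂ → ℂ) (z : ℂ) (hz : c ≤ ‖z‖ ∧ ‖z‖ < 1) :
    (‖f z / g z‖₊ : ℝ≥0∞) ≤ ratioSup c f g :=
  le_iSup₂ (f := fun (z : ℂ) (_ : c ≤ ‖z‖ ∧ ‖z‖ < 1) => (‖f z / g z‖₊ : ℝ≥0∞)) z hz

lemma eval_affine (p : Polynomial ℂ) (hp : p.degree ≤ 1) (z : ℂ) :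
    p.eval z = p.coeff 0 + p.coeff 1 * z := by
  conv_lhs => rw [Polynomial.eq_X_add_C_of_degree_le_one hp]
  simp [add_comm]

lemma lower_bound (c ζ : ℝ) (hc0 : 0 < c) (hcζ : c ≤ ζ) (hζ1 : ζ < 1)
    (hζ2 : 1/2 ≤ ζ^2) (p q : Polynomial ℂ) (hp1 : p.degree ≤ 1) (hq1 : q.degree ≤ 1)
    (hpn : bnorm (fun z => p.eval z) = 1) (hqn : bnorm (fun z => q.eval z) = 1) :
    ENNReal.ofReal (1/(Real.sqrt 2 * ζ)) ≤
      ratioSup c (fun z => p.eval z) (fun z => q.eval z) := by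
  have hζ0 : 0 < ζ := lt_of_lt_of_le hc0 hcζ
  set a := p.coeff 0 with ha'
  set b := p.coeff 1 with hb'
  set α := q.coeff 0 with hα'
  set β := q.coeff 1 with hβ'
  have hpe : ∀ z, p.eval z = a + b * z := eval_affine p hp1
  have hqe : ∀ z, q.eval z = α + β * z := eval_affine q hq1
  have hA : ‖a‖^2 + ‖b‖^2/2 = 1 := by
    apply coeffs_of_bnorm_one
    rw [show (fun z => a + b*z) = fun z => p.eval z from funext fun z => (hpe z).symm]
    exact hpn
  have hC : ‖α‖^2 + ‖β‖^2/2 = 1 := by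
    apply coeffs_of_bnorm_one
    rw [show (fun z => α + β*z) = fun z => q.eval z from funext fun z => (hqe z).symm]
    exact hqn
  -- q has at most one root
  have hroot : ∀ x y : ℂ, q.eval x = 0 → q.eval y = 0 → x = y := by
    intro x y hx hy
    rw [hqe] at hx hy
    by_cases hβ0 : β = 0
    · exfalso
      rw [hβ0, zero_mul, add_zero] at hx
      rw [hx, hβ0] at hC
      simp at hC
    · have : β * x = β * y := by linear_combination hx - hy
      exact mul_left_cancel₀ hβ0 this
  -- choose a good antipodal pair on the circle of radius ζ
  obtain ⟨w, hwn, hqp, hqm⟩ : ∃ w : ℂ, ‖w‖ = ζ ∧ q.eval w ≠ 0 ∧ q.eval (-w) ≠ 0 := by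
    set w₁ : ℂ := (ζ : ℂ) with hw₁
    set w₂ : ℂ := (ζ : ℂ) * Complex.I with hw₂
    have hn₁ : ‖w₁‖ = ζ := by simp [hw₁, abs_of_pos hζ0]
    have hn₂ : ‖w₂‖ = ζ := by simp [hw₂, abs_of_pos hζ0]
    have him₁ : w₁.im = 0 := by simp [hw₁]
    have him₂ : w₂.im = ζ := by simp [hw₂]
    have him₂' : (-w₂).im = -ζ := by simp [hw₂]
    by_cases h1 : q.eval w₁ = 0
    · refine ⟨w₂, hn₂, ?_, ?_⟩
      · intro h; have heq := hroot _ _ h h1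
        have : ζ = 0 := by rw [← him₂, heq, him₁]
        exact absurd this (ne_of_gt hζ0)
      · intro h; have heq := hroot _ _ h h1
        have : -ζ = 0 := by rw [← him₂', heq, him₁]
        have : ζ = 0 := by linarith
        exact absurd this (ne_of_gt hζ0)
    · by_cases h2 : q.eval (-w₁) = 0
      · have him₁' : (-w₁ : ℂ).im = 0 := by simp [hw₁]
        refine ⟨w₂, hn₂, ?_, ?_⟩
        · intro h; have heq := hroot _ _ h h2
          have : ζ = 0 := by rw [← him₂, heq, him₁']
          exact absurd this (ne_of_gt hζ0)
        · intro h; have heq := hroot _ _ h h2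
          have : -ζ = 0 := by rw [← him₂', heq, him₁']
          have : ζ = 0 := by linarith
          exact absurd this (ne_of_gt hζ0)
      · exact ⟨w₁, hn₁, h1, h2⟩
  set s := ratioSup c (fun z => p.eval z) (fun z => q.eval z) with hs'
  clear_value s
  by_cases hs : s = ⊤
  · rw [hs]; exact le_top
  set t := s.toReal with ht'
  clear_value t
  have ht0 : 0 ≤ t := ht' ▸ ENNReal.toReal_nonneg
  have hmemp : c ≤ ‖w‖ ∧ ‖w‖ < 1 := ⟨hwn ▸ hcζ, hwn ▸ hζ1⟩
  have hmemm : c ≤ ‖-w‖ ∧ ‖-w‖ < 1 := by rw [norm_neg]; exact hmemp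
  have hbd : ∀ z : ℂ, c ≤ ‖z‖ ∧ ‖z‖ < 1 → q.eval z ≠ 0 → ‖p.eval z‖ ≤ t * ‖q.eval z‖ := by
    intro z hz hqz
    have h1 := le_ratioSup c (fun z => p.eval z) (fun z => q.eval z) z hz
    rw [← hs'] at h1
    have h2 : ‖p.eval z / q.eval z‖ ≤ t := by
      have h2' := ENNReal.toReal_mono hs h1
      rw [← ht'] at h2'
      simpa using h2'
    rw [norm_div] at h2
    have hq0 : 0 < ‖q.eval z‖ := norm_pos_iff.2 hqz
    have h3 := mul_le_mul_of_nonneg_right h2 hq0.le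
    rwa [div_mul_cancel₀ _ (ne_of_gt hq0)] at h3
  have hbp := hbd w hmemp hqp
  have hbm := hbd (-w) hmemm hqm
  -- parallelogram identities
  have P1 : ‖p.eval w‖^2 + ‖p.eval (-w)‖^2 = 2*‖a‖^2 + 2*‖b‖^2*ζ^2 := by
    rw [hpe w, hpe (-w)]
    have hpar := parallelogram_law_with_norm ℝ a (b*w)
    have hm : ‖b*w‖ = ‖b‖*‖w‖ := norm_mul b w
    rw [hwn] at hm
    have e2 : a + b*(-w) = a - b*w := by ring
    rw [e2]
    rw [hm] at hpar
    linear_combination hpar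
  have P2 : ‖q.eval w‖^2 + ‖q.eval (-w)‖^2 = 2*‖α‖^2 + 2*‖β‖^2*ζ^2 := by
    rw [hqe w, hqe (-w)]
    have hpar := parallelogram_law_with_norm ℝ α (β*w)
    have hm : ‖β*w‖ = ‖β‖*‖w‖ := norm_mul β w
    rw [hwn] at hm
    have e2 : α + β*(-w) = α - β*w := by ring
    rw [e2]
    rw [hm] at hpar
    linear_combination hpar
  -- combine
  have key : 2*‖a‖^2 + 2*‖b‖^2*ζ^2 ≤ t^2 * (2*‖α‖^2 + 2*‖β‖^2*ζ^2) := by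
    have s1 : ‖p.eval w‖^2 ≤ t^2*‖q.eval w‖^2 := by
      have h := pow_le_pow_left₀ (norm_nonneg _) hbp 2
      rwa [mul_pow] at h
    have s2 : ‖p.eval (-w)‖^2 ≤ t^2*‖q.eval (-w)‖^2 := by
      have h := pow_le_pow_left₀ (norm_nonneg _) hbm 2
      rwa [mul_pow] at h
    calc 2*‖a‖^2 + 2*‖b‖^2*ζ^2 = ‖p.eval w‖^2 + ‖p.eval (-w)‖^2 := P1.symm
    _ ≤ t^2*‖q.eval w‖^2 + t^2*‖q.eval (-w)‖^2 := add_le_add s1 s2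
    _ = t^2*(‖q.eval w‖^2 + ‖q.eval (-w)‖^2) := by ring
    _ = t^2 * (2*‖α‖^2 + 2*‖β‖^2*ζ^2) := by rw [P2]
  have hs2 : Real.sqrt 2 > 0 := by positivity
  have hs2sq : Real.sqrt 2 ^ 2 = 2 := Real.sq_sqrt (by norm_num)
  have hfin : 1/(Real.sqrt 2 * ζ) ≤ t := by
    have hB2 : 0 ≤ ‖b‖^2 * (ζ^2 - 1/2) := mul_nonneg (sq_nonneg _) (by linarith only [hζ2])
    have h1 : (2:ℝ) ≤ 2*‖a‖^2 + 2*‖b‖^2*ζ^2 := by linarith only [hA, hB2]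
    have hD2 : 0 ≤ (2 - ‖β‖^2) * (ζ^2 - 1/2) :=
      mul_nonneg (by linarith only [hC, sq_nonneg ‖α‖]) (by linarith only [hζ2])
    have h2 : 2*‖α‖^2 + 2*‖β‖^2*ζ^2 ≤ 4*ζ^2 := by linarith only [hC, hD2]
    have hT : t^2 * (2*‖α‖^2 + 2*‖β‖^2*ζ^2) ≤ t^2 * (4*ζ^2) :=
      mul_le_mul_of_nonneg_left h2 (sq_nonneg t)
    have h3 : (2:ℝ) ≤ t^2 * (4*ζ^2) := by linarith only [key, h1, hT]
    have hring : (t * (Real.sqrt 2 * ζ))^2 = t^2 * (Real.sqrt 2^2) * ζ^2 := by ring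
    have h4 : (1:ℝ) ≤ (t * (Real.sqrt 2 * ζ))^2 := by
      rw [hring, hs2sq]; linarith only [h3]
    have hu0 : 0 ≤ t * (Real.sqrt 2 * ζ) := mul_nonneg ht0 (mul_nonneg hs2.le hζ0.le)
    have h5 : (1:ℝ) ≤ t * (Real.sqrt 2 * ζ) :=
      (one_le_pow_iff_of_nonneg hu0 (two_ne_zero)).1 h4
    rw [div_le_iff₀ (by positivity)]
    linarith only [h5]
  calc ENNReal.ofReal (1/(Real.sqrt 2 * ζ)) ≤ ENNReal.ofReal t := ENNReal.ofReal_le_ofReal hfin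
  _ = s := by rw [ht']; exact ENNReal.ofReal_toReal hs

lemma memA2_poly (p : Polynomial ℂ) : memA2 (fun z => p.eval z) :=
  ⟨(p.differentiable).differentiableOn,
   cont_intOn ((p.continuous_aeval).norm.pow 2)⟩

lemma pmem : (Polynomial.C (1:ℂ)) ∈
    {p : Polynomial ℂ | p.degree ≤ (1 : ℕ) ∧ (fun z => p.eval z) ∈ sphereA2} := by
  constructor
  · rw [Polynomial.degree_C one_ne_zero]
    norm_num
  · refine ⟨memA2_poly _, ?_⟩
    have : (fun z : ℂ => (Polynomial.C (1:ℂ)).eval z) = fun z : ℂ => (1:ℂ) + 0*z := by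
      funext z; simp
    rw [this, bnorm_affine]
    simp

lemma qmem : (Polynomial.C ((Real.sqrt 2 : ℝ) : ℂ) * Polynomial.X) ∈
    {q : Polynomial ℂ | q.degree ≤ (1 : ℕ) ∧ (fun z => q.eval z) ∈ sphereA2} := by
  have hs2 : (0:ℝ) < Real.sqrt 2 := by positivity
  have hne : ((Real.sqrt 2 : ℝ) : ℂ) ≠ 0 := Complex.ofReal_ne_zero.2 (ne_of_gt hs2)
  constructor
  · rw [Polynomial.degree_C_mul_X hne]; norm_num
  · refine ⟨memA2_poly _, ?_⟩
    have : (fun z : ℂ => (Polynomial.C ((Real.sqrt 2 : ℝ) : ℂ) * Polynomial.X).eval z)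
        = fun z : ℂ => (0:ℂ) + ((Real.sqrt 2 : ℝ) : ℂ)*z := by
      funext z; simp
    rw [this, bnorm_affine]
    rw [show ‖((Real.sqrt 2 : ℝ) : ℂ)‖ = Real.sqrt 2 by
      rw [Complex.norm_real]; exact abs_of_pos hs2]
    rw [Real.sq_sqrt (by norm_num : (2:ℝ) ≥ 0)]
    norm_num

lemma ratioSup_one (c : ℝ) (hc0 : 0 < c) (hc1 : c < 1) :
    ratioSup c (fun z => (Polynomial.C (1:ℂ)).eval z)
      (fun z => (Polynomial.C (1:ℂ)).eval z) = 1 := by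
  apply le_antisymm
  · refine iSup_le fun z => iSup_le fun _ => ?_
    simp
  · have h := le_ratioSup c (fun z => (Polynomial.C (1:ℂ)).eval z)
      (fun z => (Polynomial.C (1:ℂ)).eval z) (c:ℂ)
      ⟨by simp [abs_of_pos hc0], by simpa [abs_of_pos hc0] using hc1⟩
    simpa using h

lemma ratioSup_q (c : ℝ) (hc0 : 0 < c) (hc1 : c < 1) :
    ratioSup c (fun z => (Polynomial.C (1:ℂ)).eval z)
      (fun z => (Polynomial.C ((Real.sqrt 2 : ℝ) : ℂ) * Polynomial.X).eval z)
      = ENNReal.ofReal (1/(Real.sqrt 2 * c)) := by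
  have hs2 : (0:ℝ) < Real.sqrt 2 := by positivity
  have hns : ‖((Real.sqrt 2 : ℝ) : ℂ)‖ = Real.sqrt 2 := by
    rw [Complex.norm_real]; exact abs_of_pos hs2
  apply le_antisymm
  · refine iSup_le fun z => iSup_le fun hz => ?_
    rw [← ENNReal.ofReal_coe_nnreal, coe_nnnorm]
    apply ENNReal.ofReal_le_ofReal
    have hz0 : 0 < ‖z‖ := lt_of_lt_of_le hc0 hz.1
    simp only [Polynomial.eval_mul, Polynomial.eval_C, Polynomial.eval_X, Polynomial.eval_one]
    rw [norm_div, norm_one, norm_mul, hns]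
    have hpos : 0 < Real.sqrt 2 * c := by positivity
    exact one_div_le_one_div_of_le hpos (mul_le_mul_of_nonneg_left hz.1 hs2.le)
  · have h := le_ratioSup c (fun z => (Polynomial.C (1:ℂ)).eval z)
      (fun z => (Polynomial.C ((Real.sqrt 2 : ℝ) : ℂ) * Polynomial.X).eval z) (c:ℂ)
      ⟨by simp [abs_of_pos hc0], by simpa [abs_of_pos hc0] using hc1⟩
    rw [← ENNReal.ofReal_coe_nnreal, coe_nnnorm] at h
    have : ‖(fun z => (Polynomial.C (1:ℂ)).eval z) (c:ℂ) /
        (fun z => (Polynomial.C ((Real.sqrt 2 : ℝ) : ℂ) * Polynomial.X).eval z) (c:ℂ)‖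
        = 1/(Real.sqrt 2 * c) := by
      simp only [Polynomial.eval_mul, Polynomial.eval_C, Polynomial.eval_X, Polynomial.eval_one]
      rw [norm_div, norm_one, norm_mul, hns, Complex.norm_real, Real.norm_eq_abs,
        abs_of_pos hc0]
    rw [this] at h
    exact h

end KorenblumAux

/-- `F₁(c) = 1` for `0 < c ≤ 1/√2` and `F₁(c) = 1/(√2 c)` for
`1/√2 < c < 1`; in particular `κ₁ = 1/√2`. -/
theorem stmt16 :
    (∀ c : ℝ, 0 < c → c ≤ 1 / Real.sqrt 2 → KFn 1 c = 1) ∧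
    (∀ c : ℝ, 1 / Real.sqrt 2 < c → c < 1 →
      KFn 1 c = ENNReal.ofReal (1 / (Real.sqrt 2 * c))) := by
  have hs2 : (0:ℝ) < Real.sqrt 2 := by positivity
  have h1lt : 1/Real.sqrt 2 < 1 := by
    rw [div_lt_one hs2]
    have := Real.sqrt_lt_sqrt (by norm_num : (0:ℝ) ≤ 1) (by norm_num : (1:ℝ) < 2)
    simpa using this
  have hsq : (1/Real.sqrt 2)^2 = 1/2 := by
    rw [div_pow, one_pow, Real.sq_sqrt (by norm_num : (0:ℝ) ≤ 2)]
  constructor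
  · intro c hc0 hc1
    have hc1' : c < 1 := lt_of_le_of_lt hc1 h1lt
    apply le_antisymm
    · refine le_trans ?_ (le_of_eq (ratioSup_one c hc0 hc1'))
      unfold KFn
      exact le_trans (iInf₂_le _ pmem) (iInf₂_le _ pmem)
    · unfold KFn
      refine le_iInf fun p => le_iInf fun hp => le_iInf fun q => le_iInf fun hq => ?_
      have hlb := lower_bound c (1/Real.sqrt 2) hc0 hc1 h1lt (le_of_eq hsq.symm)
        p q hp.1 hq.1 hp.2.2 hq.2.2
      have he : Real.sqrt 2 * (1/Real.sqrt 2) = 1 := mul_one_div_cancel (ne_of_gt hs2)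
      rw [he] at hlb
      simpa using hlb
  · intro c hgt hc1
    have hc0 : 0 < c := lt_trans (by positivity) hgt
    apply le_antisymm
    · refine le_trans ?_ (le_of_eq (ratioSup_q c hc0 hc1))
      unfold KFn
      exact le_trans (iInf₂_le _ pmem) (iInf₂_le _ qmem)
    · unfold KFn
      refine le_iInf fun p => le_iInf fun hp => le_iInf fun q => le_iInf fun hq => ?_
      have hsqlt : (1/Real.sqrt 2)^2 < c^2 :=
        pow_lt_pow_left₀ hgt (by positivity) two_ne_zero
      exact lower_bound c c hc0 le_rfl hc1 (by rw [hsq] at hsqlt; linarith)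
        p q hp.1 hq.1 hp.2.2 hq.2.2
end

section
/- The Korenblum constant for bounded analytic functions equals the Korenblum constant for the full Bergman space: κ = κ^b. -/
open MeasureTheory Metric Set Filter Topology
open scoped ENNReal NNReal

/-- Bounded analytic functions on the unit disk. -/
def memHinf (f : ℂ → ℂ) : Prop := ∃ M : ℝ, ∀ z ∈ ball (0 : ℂ) 1, ‖f z‖ ≤ M

/-- Korenblum's function for bounded analytic functions. -/
noncomputable def KFb (c : ℝ) : ℝ≥0∞ :=
  ⨅ (f ∈ {f : ℂ → ℂ | f ∈ sphereA2 ∧ memHinf f})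
    (g ∈ {g : ℂ → ℂ | g ∈ sphereA2 ∧ memHinf g}), ratioSup c f g

lemma KF_le_KFb (c : ℝ) : KF c ≤ KFb c := by
  simp only [KF, KFb]
  refine le_iInf₂ fun f hf => le_iInf₂ fun g hg => ?_
  exact iInf₂_le_of_le f hf.1 (iInf₂_le g hg.1)

lemma integral_dilate (f : ℂ → ℂ) {r : ℝ} (hr : 0 < r) :
    ∫ z in ball (0:ℂ) 1, ‖f ((r:ℂ) * z)‖ ^ 2
      = (r ^ 2)⁻¹ * ∫ z in ball (0:ℂ) r, ‖f z‖ ^ 2 := by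
  have h := Measure.setIntegral_comp_smul_of_pos (volume : Measure ℂ)
      (fun z => ‖f z‖ ^ 2) (ball (0:ℂ) 1) hr
  rw [smul_unitBall_of_pos hr] at h
  simpa [Complex.finrank_real_complex, Complex.real_smul, smul_eq_mul] using h

lemma bnorm_const_mul (k : ℂ) (f : ℂ → ℂ) :
    bnorm (fun z => k * f z) = ‖k‖ * bnorm f := by
  have h : ∫ z in ball (0:ℂ) 1, ‖k * f z‖ ^ 2
      = ‖k‖ ^ 2 * ∫ z in ball (0:ℂ) 1, ‖f z‖ ^ 2 := by
    simp_rw [norm_mul, mul_pow]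
    exact integral_const_mul _ _
  unfold bnorm
  rw [h, ← mul_assoc, mul_comm (1 / Real.pi) (‖k‖ ^ 2), mul_assoc,
    Real.sqrt_mul (sq_nonneg _), Real.sqrt_sq (norm_nonneg k)]

lemma dilate_mem {f : ℂ → ℂ} (hf : memA2 f) {r : ℝ} (hr0 : 0 < r) (hr1 : r < 1) (k : ℂ) :
    memA2 (fun z => k * f ((r:ℂ) * z)) ∧ memHinf (fun z => k * f ((r:ℂ) * z)) := by
  obtain ⟨M, hM⟩ : ∃ M, ∀ w ∈ closedBall (0:ℂ) r, ‖f w‖ ≤ M := by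
    have hc : ContinuousOn f (closedBall (0:ℂ) r) :=
      hf.1.continuousOn.mono (closedBall_subset_ball hr1)
    exact (isCompact_closedBall _ _).exists_bound_of_continuousOn hc
  have hmap : ∀ z ∈ ball (0:ℂ) 1, (r:ℂ) * z ∈ closedBall (0:ℂ) r := by
    intro z hz
    rw [mem_ball_zero_iff] at hz
    rw [mem_closedBall_zero_iff, norm_mul, Complex.norm_real, Real.norm_eq_abs,
      abs_of_pos hr0]
    nlinarith [norm_nonneg z]
  have hmap' : MapsTo (fun z => (r:ℂ) * z) (ball (0:ℂ) 1) (ball (0:ℂ) 1) :=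
    fun z hz => closedBall_subset_ball hr1 (hmap z hz)
  have hcont : ContinuousOn (fun z => k * f ((r:ℂ) * z)) (ball (0:ℂ) 1) := by
    apply ContinuousOn.mul continuousOn_const
    exact hf.1.continuousOn.comp ((continuous_mul_left ((r:ℂ))).continuousOn) hmap'
  have hM0 : 0 ≤ M := (norm_nonneg (f 0)).trans (hM 0 (mem_closedBall_self hr0.le))
  have hbound : ∀ z ∈ ball (0:ℂ) 1, ‖k * f ((r:ℂ) * z)‖ ≤ ‖k‖ * M := by
    intro z hz
    rw [norm_mul]
    exact mul_le_mul_of_nonneg_left (hM _ (hmap z hz)) (norm_nonneg k)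
  refine ⟨⟨?_, ?_⟩, ⟨‖k‖ * M, hbound⟩⟩
  · apply DifferentiableOn.const_mul
    exact hf.1.comp ((differentiable_id.const_mul ((r:ℂ))).differentiableOn) hmap'
  · refine Integrable.mono' (g := fun _ => (‖k‖ * M) ^ 2)
      (integrableOn_const measure_ball_lt_top.ne) ?_ ?_
    · exact ((hcont.norm).pow 2).aestronglyMeasurable measurableSet_ball
    · filter_upwards [ae_restrict_mem measurableSet_ball] with z hz
      have h1 := hbound z hz
      have h2 : ‖(‖k * f ((r:ℂ)*z)‖ ^ 2 : ℝ)‖ = ‖k * f ((r:ℂ)*z)‖ ^ 2 := by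
        rw [Real.norm_eq_abs, abs_of_nonneg (by positivity)]
      rw [h2]
      exact pow_le_pow_left₀ (norm_nonneg _) h1 2

set_option maxHeartbeats 2000000 in
lemma KFb_lt_one {c c' : ℝ} (hc : 0 < c) (hcc' : c < c') (hc'1 : c' < 1)
    (h : KF c < 1) : KFb c' < 1 := by
  have hπ := Real.pi_pos
  obtain ⟨f, hf, g, hg, hT⟩ : ∃ f, f ∈ sphereA2 ∧ ∃ g, g ∈ sphereA2 ∧ ratioSup c f g < 1 := by
    simpa [KF, iInf_lt_iff] using h
  have hc'0 : 0 < c' := hc.trans hcc'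
  -- t and its properties
  set t : ℝ := (ratioSup c f g).toReal with ht_def
  have hTne : ratioSup c f g ≠ ⊤ := (hT.trans ENNReal.one_lt_top).ne
  have htlt : t < 1 := by
    have := (ENNReal.toReal_lt_toReal hTne ENNReal.one_ne_top).mpr hT
    simpa using this
  have ht0 : 0 ≤ t := ENNReal.toReal_nonneg
  have hfg : ∀ w : ℂ, c ≤ ‖w‖ → ‖w‖ < 1 → ‖f w / g w‖ ≤ t := by
    intro w h1 h2
    have hle : (‖f w / g w‖₊ : ℝ≥0∞) ≤ ratioSup c f g := by
      rw [ratioSup]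
      exact le_iSup₂ (f := fun z (_ : c ≤ ‖z‖ ∧ ‖z‖ < 1) => ((‖f z / g z‖₊ : ℝ≥0∞))) w ⟨h1, h2⟩
    have := ENNReal.toReal_mono hTne hle
    simpa using this
  -- the parameters s, ε
  set s : ℝ := (1 + t) / 2 with hs_def
  have hs0 : 0 < s := by simp only [hs_def]; linarith
  have hs1 : s < 1 := by simp only [hs_def]; linarith
  have hs2 : t < s ^ 2 := by simp only [hs_def]; nlinarith
  set ε : ℝ := Real.pi * (1 - s ^ 2) with hε_def
  have hε : 0 < ε := by
    apply mul_pos hπ; nlinarith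
  -- the exhausting sequence
  set u : ℕ → ℝ := fun n => 1 - 1 / ((n : ℝ) + 2) with hu_def
  have hu0 : ∀ n, 0 < u n := by
    intro n
    have h1 : 1 / ((n : ℝ) + 2) ≤ 1 / 2 := by
      apply one_div_le_one_div_of_le
      · norm_num
      · have := Nat.cast_nonneg (α := ℝ) n; linarith
    simp only [hu_def]; linarith
  have hu1 : ∀ n, u n < 1 := by
    intro n
    have h1 : 0 < 1 / ((n : ℝ) + 2) := by positivity
    simp only [hu_def]; linarith
  have humono : Monotone u := by
    intro n m hnm
    simp only [hu_def]
    have : 1 / ((m : ℝ) + 2) ≤ 1 / ((n : ℝ) + 2) := by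
      apply one_div_le_one_div_of_le
      · positivity
      · have := (Nat.cast_le (α := ℝ)).mpr hnm; linarith
    linarith
  have hUnion : (⋃ n, ball (0:ℂ) (u n)) = ball (0:ℂ) 1 := by
    ext z
    simp only [mem_iUnion, mem_ball, dist_zero_right]
    constructor
    · rintro ⟨n, hn⟩; exact hn.trans (hu1 n)
    · intro hz
      obtain ⟨n, hn⟩ := exists_nat_one_div_lt (by linarith : (0:ℝ) < 1 - ‖z‖)
      refine ⟨n, ?_⟩
      have h2 : 1 / ((n : ℝ) + 2) ≤ 1 / ((n : ℝ) + 1) := by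
        apply one_div_le_one_div_of_le
        · positivity
        · linarith
      simp only [hu_def]; push_cast at hn ⊢; linarith
  have hutend : Tendsto u atTop (𝓝 1) := by
    have h2 : Tendsto (fun n : ℕ => 1 / ((n : ℝ) + 2)) atTop (𝓝 0) := by
      simp only [one_div]
      exact Tendsto.inv_tendsto_atTop
        (tendsto_atTop_add_const_right _ 2 tendsto_natCast_atTop_atTop)
    have h3 : Tendsto (fun n : ℕ => 1 - 1 / ((n : ℝ) + 2)) atTop (𝓝 (1 - 0)) :=
      tendsto_const_nhds.sub h2
    simpa [hu_def, one_div] using h3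
  -- integrals over the balls
  have hnorm_int : ∀ h : ℂ → ℂ, h ∈ sphereA2 →
      ∫ z in ball (0:ℂ) 1, ‖h z‖ ^ 2 = Real.pi := by
    intro h hh
    have h1 : Real.sqrt ((1 / Real.pi) * ∫ z in ball (0:ℂ) 1, ‖h z‖ ^ 2) = 1 := hh.2
    have h2 := Real.sqrt_eq_one.mp h1
    have h3 : ∫ z in ball (0:ℂ) 1, ‖h z‖ ^ 2
        = Real.pi * ((1 / Real.pi) * ∫ z in ball (0:ℂ) 1, ‖h z‖ ^ 2) := by
      field_simp
    rw [h3, h2, mul_one]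
  set Jf : ℕ → ℝ := fun n => ∫ z in ball (0:ℂ) (u n), ‖f z‖ ^ 2 with hJf_def
  set Jg : ℕ → ℝ := fun n => ∫ z in ball (0:ℂ) (u n), ‖g z‖ ^ 2 with hJg_def
  have hJftend : Tendsto Jf atTop (𝓝 Real.pi) := by
    have := tendsto_setIntegral_of_monotone (μ := volume) (f := fun z => ‖f z‖ ^ 2)
      (s := fun n => ball (0:ℂ) (u n)) (fun i => measurableSet_ball)
      (fun n m hnm => ball_subset_ball (humono hnm)) (by rw [hUnion]; exact hf.1.2)
    rwa [hUnion, hnorm_int f hf] at this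
  have hJgtend : Tendsto Jg atTop (𝓝 Real.pi) := by
    have := tendsto_setIntegral_of_monotone (μ := volume) (f := fun z => ‖g z‖ ^ 2)
      (s := fun n => ball (0:ℂ) (u n)) (fun i => measurableSet_ball)
      (fun n m hnm => ball_subset_ball (humono hnm)) (by rw [hUnion]; exact hg.1.2)
    rwa [hUnion, hnorm_int g hg] at this
  -- choose N
  have ev1 : ∀ᶠ n in atTop, Real.pi - ε < Jf n :=
    hJftend.eventually (eventually_gt_nhds (by linarith))
  have ev2 : ∀ᶠ n in atTop, Real.pi - ε < Jg n :=
    hJgtend.eventually (eventually_gt_nhds (by linarith))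
  have ev3 : ∀ᶠ n in atTop, s < u n := hutend.eventually (eventually_gt_nhds hs1)
  have ev4 : ∀ᶠ n in atTop, c / c' < u n :=
    hutend.eventually (eventually_gt_nhds (by rw [div_lt_one hc'0]; linarith))
  obtain ⟨N, h1, h2, h3, h4⟩ := (ev1.and (ev2.and (ev3.and ev4))).exists
  set r : ℝ := u N with hr_def
  have hr0 : 0 < r := hu0 N
  have hr1 : r < 1 := hu1 N
  have hrs : s < r := h3
  have hrc : c ≤ r * c' := by
    have := (div_lt_iff₀ hc'0).mp h4
    linarith
  -- dilated functions and their norms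
  set a : ℝ := bnorm (fun z => f ((r:ℂ) * z)) with ha_def
  set b : ℝ := bnorm (fun z => g ((r:ℂ) * z)) with hb_def
  have hr2pos : (0:ℝ) < r ^ 2 := by positivity
  have hr2le : r ^ 2 ≤ 1 := by nlinarith
  have hinv1 : (1:ℝ) ≤ (r ^ 2)⁻¹ := one_le_inv_iff₀.mpr ⟨hr2pos, hr2le⟩
  have key_lower : ∀ (h : ℂ → ℂ), Real.pi - ε < (∫ z in ball (0:ℂ) r, ‖h z‖ ^ 2) →
      s ≤ bnorm (fun z => h ((r:ℂ) * z)) := by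
    intro h hJ
    have hJ' : Real.pi * s ^ 2 ≤ ∫ z in ball (0:ℂ) r, ‖h z‖ ^ 2 := by
      have : Real.pi - ε = Real.pi * s ^ 2 := by rw [hε_def]; ring
      linarith
    have hJnn : 0 ≤ ∫ z in ball (0:ℂ) r, ‖h z‖ ^ 2 := by
      apply setIntegral_nonneg measurableSet_ball
      intro z _; positivity
    have h3 : Real.pi * s ^ 2 ≤ (r ^ 2)⁻¹ * ∫ z in ball (0:ℂ) r, ‖h z‖ ^ 2 :=
      hJ'.trans (le_mul_of_one_le_left hJnn hinv1)
    have key : s ^ 2 ≤ (1 / Real.pi) * ((r ^ 2)⁻¹ * ∫ z in ball (0:ℂ) r, ‖h z‖ ^ 2) := by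
      have e1 : s ^ 2 = (1 / Real.pi) * (Real.pi * s ^ 2) := by field_simp
      rw [e1]
      exact mul_le_mul_of_nonneg_left h3 (by positivity)
    unfold bnorm
    rw [integral_dilate h hr0]
    calc s = Real.sqrt (s ^ 2) := (Real.sqrt_sq hs0.le).symm
    _ ≤ _ := Real.sqrt_le_sqrt key
  have ha_low : s ≤ a := key_lower f h1
  have hb_low : s ≤ b := key_lower g h2
  have ha0 : 0 < a := hs0.trans_le ha_low
  have hb0 : 0 < b := hs0.trans_le hb_low
  have hb_up : b ≤ r⁻¹ := by
    have hJle : Jg N ≤ Real.pi := by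
      rw [← hnorm_int g hg]
      exact setIntegral_mono_set hg.1.2
        (Eventually.of_forall fun z => by positivity)
        (HasSubset.Subset.eventuallyLE (ball_subset_ball (hu1 N).le))
    have harg : (1 / Real.pi) * ((r ^ 2)⁻¹ * Jg N) ≤ (r ^ 2)⁻¹ := by
      have h4 : (r ^ 2)⁻¹ * Jg N ≤ (r ^ 2)⁻¹ * Real.pi :=
        mul_le_mul_of_nonneg_left hJle (by positivity)
      calc (1 / Real.pi) * ((r ^ 2)⁻¹ * Jg N)
          ≤ (1 / Real.pi) * ((r ^ 2)⁻¹ * Real.pi) :=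
        mul_le_mul_of_nonneg_left h4 (by positivity)
      _ = (r ^ 2)⁻¹ := by field_simp
    rw [hb_def]
    unfold bnorm
    rw [integral_dilate g hr0]
    calc Real.sqrt ((1 / Real.pi) * ((r ^ 2)⁻¹ * Jg N)) ≤ Real.sqrt ((r ^ 2)⁻¹) :=
      Real.sqrt_le_sqrt harg
    _ = r⁻¹ := by rw [← inv_pow, Real.sqrt_sq (by positivity)]
  -- the normalized dilated functions
  set F : ℂ → ℂ := fun z => ((a : ℂ))⁻¹ * f ((r:ℂ) * z) with hF_def
  set G : ℂ → ℂ := fun z => ((b : ℂ))⁻¹ * g ((r:ℂ) * z) with hG_def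
  have hFmem := dilate_mem hf.1 hr0 hr1 ((a : ℂ))⁻¹
  have hGmem := dilate_mem hg.1 hr0 hr1 ((b : ℂ))⁻¹
  have hnorminv : ∀ x : ℝ, 0 < x → ‖((x : ℂ))⁻¹‖ = x⁻¹ := by
    intro x hx
    rw [norm_inv, Complex.norm_real, Real.norm_eq_abs, abs_of_pos hx]
  have hFnorm : bnorm F = 1 := by
    rw [hF_def, bnorm_const_mul, hnorminv a ha0, ← ha_def, inv_mul_cancel₀ ha0.ne']
  have hGnorm : bnorm G = 1 := by
    rw [hG_def, bnorm_const_mul, hnorminv b hb0, ← hb_def, inv_mul_cancel₀ hb0.ne']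
  have hFS : F ∈ {f : ℂ → ℂ | f ∈ sphereA2 ∧ memHinf f} := ⟨⟨hFmem.1, hFnorm⟩, hFmem.2⟩
  have hGS : G ∈ {g : ℂ → ℂ | g ∈ sphereA2 ∧ memHinf g} := ⟨⟨hGmem.1, hGnorm⟩, hGmem.2⟩
  -- bounding the ratio
  have hratio : ratioSup c' F G ≤ ENNReal.ofReal (t / s ^ 2) := by
    rw [ratioSup]
    refine iSup₂_le fun z hz => ?_
    obtain ⟨hz1, hz2⟩ := hz
    have hzn : ‖(r:ℂ) * z‖ = r * ‖z‖ := by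
      rw [norm_mul, Complex.norm_real, Real.norm_eq_abs, abs_of_pos hr0]
    have hw1 : c ≤ ‖(r:ℂ) * z‖ := by
      rw [hzn]
      calc c ≤ r * c' := hrc
      _ ≤ r * ‖z‖ := by nlinarith
    have hw2 : ‖(r:ℂ) * z‖ < 1 := by rw [hzn]; nlinarith
    have hFG : F z / G z = (((b:ℝ) : ℂ) / ((a:ℝ) : ℂ)) * (f ((r:ℂ)*z) / g ((r:ℂ)*z)) := by
      rw [hF_def, hG_def]
      simp only []
      rw [div_eq_mul_inv, mul_inv, inv_inv]
      ring
    have hnorm : ‖F z / G z‖ = (b / a) * ‖f ((r:ℂ)*z) / g ((r:ℂ)*z)‖ := by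
      rw [hFG, norm_mul, norm_div, Complex.norm_real, Complex.norm_real,
        Real.norm_eq_abs, Real.norm_eq_abs, abs_of_pos hb0, abs_of_pos ha0]
    have hba : b / a ≤ 1 / s ^ 2 := by
      rw [div_le_div_iff₀ ha0 (by positivity)]
      have hrb : b * s ≤ 1 := by
        have : r⁻¹ * s ≤ 1 := by
          rw [← div_eq_inv_mul, div_le_one hr0]
          linarith
        nlinarith
      nlinarith
    have hle : ‖F z / G z‖ ≤ t / s ^ 2 := by
      rw [hnorm]
      calc (b / a) * ‖f ((r:ℂ)*z) / g ((r:ℂ)*z)‖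
          ≤ (1 / s ^ 2) * t :=
        mul_le_mul hba (hfg _ hw1 hw2) (norm_nonneg _) (by positivity)
      _ = t / s ^ 2 := by ring
    calc (‖F z / G z‖₊ : ℝ≥0∞) = ENNReal.ofReal ‖F z / G z‖ :=
      (ofReal_norm _).symm
    _ ≤ ENNReal.ofReal (t / s ^ 2) := ENNReal.ofReal_le_ofReal hle
  have hKFb : KFb c' ≤ ratioSup c' F G := by
    rw [KFb]
    exact iInf₂_le_of_le F hFS (iInf₂_le G hGS)
  refine lt_of_le_of_lt (hKFb.trans hratio) ?_
  rw [← ENNReal.ofReal_one]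
  apply ENNReal.ofReal_lt_ofReal_iff_of_nonneg (by positivity) |>.mpr
  rw [div_lt_one (by positivity)]
  exact hs2


/-- The Korenblum constant for bounded analytic functions equals the
Korenblum constant for the full Bergman space: `κ = κᵇ`. -/
theorem stmt18 (κ κb : ℝ) (hκ0 : 0 < κ) (hκ1 : κ < 1) (hκb0 : 0 < κb) (hκb1 : κb < 1)
    (hFone : ∀ c : ℝ, 0 < c → c ≤ κ → KF c = 1)
    (hFlt : ∀ c : ℝ, κ < c → c < 1 → KF c < 1)
    (hFbone : ∀ c : ℝ, 0 < c → c ≤ κb → KFb c = 1)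
    (hFblt : ∀ c : ℝ, κb < c → c < 1 → KFb c < 1) :
    κ = κb := by
  by_contra hne
  rcases lt_or_gt_of_ne hne with hlt | hgt
  · have h1 : KF ((κ + κb) / 2) < 1 := hFlt _ (by linarith) (by linarith)
    have h2 : KFb κb < 1 :=
      KFb_lt_one (by linarith : (0:ℝ) < (κ + κb) / 2) (by linarith) hκb1 h1
    rw [hFbone κb hκb0 le_rfl] at h2
    exact lt_irrefl _ h2
  · have h1 : KFb κ < 1 := hFblt κ hgt hκ1
    have h2 : (1 : ℝ≥0∞) ≤ KFb κ := (hFone κ hκ0 le_rfl) ▸ KF_le_KFb κ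
    exact lt_irrefl _ (lt_of_le_of_lt h2 h1)
end
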